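/- A diversified ¬∧∨-equivalence A ↔ B is a tautology if and only if it is a theorem of the formal system S_{¬,∧,∨} (the system with reflexivity, associativity and commutativity of ∧ and ∨, double negation, De Morgan laws, symmetry, transitivity, and congruence rules for ¬, ∧ and ∨). -/
import Mathlib


inductive Form where
  | var : ℕ → Form
  | top : Form
  | bot : Form
  | neg : Form → Form
  | and : Form → Form → Form
  | or  : Form → Form → Form
deriving DecidableEq

namespace Form

def eval (v : ℕ → Bool) : Form → Bool
  | var n => v n
  | top => true
  | bot => false
  | neg A => !(A.eval v)
  | and A B => A.eval v && B.eval v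
  | or A B => A.eval v || B.eval v

def letters : Form → Multiset ℕ
  | var n => {n}
  | top => 0
  | bot => 0
  | neg A => A.letters
  | and A B => A.letters + B.letters
  | or A B => A.letters + B.letters

end Form

/-- `A ↔ B` is a tautology. -/
def TautEquiv (A B : Form) : Prop := ∀ v : ℕ → Bool, A.eval v = B.eval v

/-- `A` is a tautology. -/
def Taut (A : Form) : Prop := ∀ v : ℕ → Bool, A.eval v = true

/-- every letter occurs at most once -/
def Diversified (A : Form) : Prop := A.letters.Nodup

/-- built from letters using only ∧ and ∨ -/
def IsAndOr : Form → Prop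
  | .var _ => True
  | .and A B => IsAndOr A ∧ IsAndOr B
  | .or A B => IsAndOr A ∧ IsAndOr B
  | _ => False

/-- the formal system S_{¬,∧,∨} -/
inductive SderN : Form → Form → Prop
  | refl (A : Form) : SderN A A
  | assocAnd (A B C : Form) : SderN ((A.and B).and C) (A.and (B.and C))
  | assocOr  (A B C : Form) : SderN ((A.or B).or C) (A.or (B.or C))
  | commAnd (A B : Form) : SderN (A.and B) (B.and A)
  | commOr  (A B : Form) : SderN (A.or B) (B.or A)
  | negneg (A : Form) : SderN (Form.neg (Form.neg A)) A
  | deMorganAnd (A B : Form) : SderN (Form.neg (A.and B)) ((Form.neg A).or (Form.neg B))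
  | deMorganOr  (A B : Form) : SderN (Form.neg (A.or B)) ((Form.neg A).and (Form.neg B))
  | symm : SderN A B → SderN B A
  | trans : SderN A B → SderN B C → SderN A C
  | congAnd : SderN A B → SderN C D → SderN (A.and C) (B.and D)
  | congOr  : SderN A B → SderN C D → SderN (A.or C) (B.or D)
  | congNeg : SderN A B → SderN (Form.neg A) (Form.neg B)

/-- built from letters using only ¬, ∧ and ∨ -/
def IsNAO : Form → Prop
  | .var _ => True
  | .neg A => IsNAO A
  | .and A B => IsNAO A ∧ IsNAO B
  | .or A B => IsNAO A ∧ IsNAO B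
  | _ => False
/-! ### NNF formulas -/

inductive N where
  | lit : ℕ → Bool → N
  | conj : N → N → N
  | disj : N → N → N

namespace N

def toForm : N → Form
  | lit n true => Form.var n
  | lit n false => Form.neg (Form.var n)
  | conj l r => Form.and l.toForm r.toForm
  | disj l r => Form.or l.toForm r.toForm

def vars : N → Finset ℕ
  | lit n _ => {n}
  | conj l r => l.vars ∪ r.vars
  | disj l r => l.vars ∪ r.vars

def size : N → ℕ
  | lit _ _ => 1
  | conj l r => l.size + r.size + 1
  | disj l r => l.size + r.size + 1

/-- read-once -/
def RO : N → Prop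
  | lit _ _ => True
  | conj l r => RO l ∧ RO r ∧ Disjoint l.vars r.vars
  | disj l r => RO l ∧ RO r ∧ Disjoint l.vars r.vars

def HasLeaf : N → ℕ → Bool → Prop
  | lit n b, m, c => n = m ∧ b = c
  | conj l r, m, c => HasLeaf l m c ∨ HasLeaf r m c
  | disj l r, m, c => HasLeaf l m c ∨ HasLeaf r m c

/-- monotone evaluation on atoms -/
def evalL (w : ℕ → Bool) : N → Bool
  | lit n _ => w n
  | conj l r => l.evalL w && r.evalL w
  | disj l r => l.evalL w || r.evalL w

def pol : N → ℕ → Bool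
  | lit _ b, _ => b
  | conj l r, m => if m ∈ l.vars then l.pol m else r.pol m
  | disj l r, m => if m ∈ l.vars then l.pol m else r.pol m

theorem vars_nonempty : ∀ P : N, P.vars.Nonempty
  | lit n _ => ⟨n, by simp [vars]⟩
  | conj l r => (vars_nonempty l).mono (by simp [vars, Finset.subset_union_left])
  | disj l r => (vars_nonempty l).mono (by simp [vars, Finset.subset_union_left])

theorem size_pos : ∀ P : N, 0 < P.size
  | lit _ _ => by simp [size]
  | conj l r => by simp [size]
  | disj l r => by simp [size]

theorem evalL_congr {w w' : ℕ → Bool} : ∀ {P : N}, (∀ n ∈ P.vars, w n = w' n) →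
    P.evalL w = P.evalL w'
  | lit n _, h => h n (by simp [vars])
  | conj l r, h => by
      simp only [evalL]
      rw [evalL_congr (fun n hn => h n (by simp [vars, hn])),
        evalL_congr (fun n hn => h n (by simp [vars, hn]))]
  | disj l r, h => by
      simp only [evalL]
      rw [evalL_congr (fun n hn => h n (by simp [vars, hn])),
        evalL_congr (fun n hn => h n (by simp [vars, hn]))]

theorem evalL_true {w : ℕ → Bool} : ∀ {P : N}, (∀ n ∈ P.vars, w n = true) →
    P.evalL w = true
  | lit n _, h => h n (by simp [vars])
  | conj l r, h => by
      simp only [evalL, Bool.and_eq_true]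
      exact ⟨evalL_true (fun n hn => h n (by simp [vars, hn])),
        evalL_true (fun n hn => h n (by simp [vars, hn]))⟩
  | disj l r, h => by
      simp only [evalL, Bool.or_eq_true]
      exact Or.inl (evalL_true (fun n hn => h n (by simp [vars, hn])))

theorem evalL_false {w : ℕ → Bool} : ∀ {P : N}, (∀ n ∈ P.vars, w n = false) →
    P.evalL w = false
  | lit n _, h => h n (by simp [vars])
  | conj l r, h => by
      simp only [evalL, Bool.and_eq_false_iff]
      exact Or.inl (evalL_false (fun n hn => h n (by simp [vars, hn])))
  | disj l r, h => by
      simp only [evalL, Bool.or_eq_false_iff]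
      exact ⟨evalL_false (fun n hn => h n (by simp [vars, hn])),
        evalL_false (fun n hn => h n (by simp [vars, hn]))⟩

theorem evalL_mono {w w' : ℕ → Bool} (hw : ∀ n, w n = true → w' n = true) :
    ∀ {P : N}, P.evalL w = true → P.evalL w' = true
  | lit n _, h => hw n h
  | conj l r, h => by
      simp only [evalL, Bool.and_eq_true] at h ⊢
      exact ⟨evalL_mono hw h.1, evalL_mono hw h.2⟩
  | disj l r, h => by
      simp only [evalL, Bool.or_eq_true] at h ⊢
      exact h.imp (evalL_mono hw) (evalL_mono hw)

theorem hasLeaf_mem_vars : ∀ {P : N} {m b}, P.HasLeaf m b → m ∈ P.vars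
  | lit n c, m, b, h => by simp [HasLeaf] at h; simp [vars, h.1.symm]
  | conj l r, m, b, h => by
      rcases h with h | h
      · exact Finset.mem_union_left _ (hasLeaf_mem_vars h)
      · exact Finset.mem_union_right _ (hasLeaf_mem_vars h)
  | disj l r, m, b, h => by
      rcases h with h | h
      · exact Finset.mem_union_left _ (hasLeaf_mem_vars h)
      · exact Finset.mem_union_right _ (hasLeaf_mem_vars h)

theorem pol_of_hasLeaf : ∀ {P : N} {m b}, P.RO → P.HasLeaf m b → P.pol m = b
  | lit n c, m, b, _, h => by simp [HasLeaf] at h; simp [pol, h.2]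
  | conj l r, m, b, hro, h => by
      rcases h with h | h
      · simp [pol, hasLeaf_mem_vars h, pol_of_hasLeaf hro.1 h]
      · have hm : m ∉ l.vars := fun hc =>
          Finset.disjoint_left.mp hro.2.2 hc (hasLeaf_mem_vars h)
        simp [pol, hm, pol_of_hasLeaf hro.2.1 h]
  | disj l r, m, b, hro, h => by
      rcases h with h | h
      · simp [pol, hasLeaf_mem_vars h, pol_of_hasLeaf hro.1 h]
      · have hm : m ∉ l.vars := fun hc =>
          Finset.disjoint_left.mp hro.2.2 hc (hasLeaf_mem_vars h)
        simp [pol, hm, pol_of_hasLeaf hro.2.1 h]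

end N
namespace N

def upd2 (w : ℕ → Bool) (a : ℕ) (x : Bool) (b : ℕ) (y : Bool) : ℕ → Bool :=
  Function.update (Function.update w a x) b y

theorem upd2_b {w a x b y} : upd2 w a x b y b = y := by simp [upd2]

theorem upd2_a {w a x b y} (h : a ≠ b) : upd2 w a x b y a = x := by
  simp [upd2, Function.update_of_ne h]

theorem upd2_other {w a x b y n} (ha : n ≠ a) (hb : n ≠ b) : upd2 w a x b y n = w n := by
  simp [upd2, Function.update_of_ne ha, Function.update_of_ne hb]

def AndPair (f : (ℕ → Bool) → Bool) (a b : ℕ) : Prop :=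
  ∃ w, ∀ x y, f (upd2 w a x b y) = (x && y)

def OrPair (f : (ℕ → Bool) → Bool) (a b : ℕ) : Prop :=
  ∃ w, ∀ x y, f (upd2 w a x b y) = (x || y)

def ShapeAnd (f : (ℕ → Bool) → Bool) (a b : ℕ) : Prop :=
  ∀ w, f (upd2 w a true b false) = true → f (upd2 w a false b true) = true →
    f (upd2 w a false b false) = true

def ShapeOr (f : (ℕ → Bool) → Bool) (a b : ℕ) : Prop :=
  ∀ w, f (upd2 w a true b true) = true →
    f (upd2 w a true b false) = true ∨ f (upd2 w a false b true) = true

theorem AndPair.not_shapeOr {f a b} (h : AndPair f a b) (hs : ShapeOr f a b) : False := by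
  obtain ⟨w, hw⟩ := h
  have := hs w (by rw [hw]; rfl)
  rw [hw, hw] at this
  simp at this

theorem OrPair.not_shapeAnd {f a b} (h : OrPair f a b) (hs : ShapeAnd f a b) : False := by
  obtain ⟨w, hw⟩ := h
  have := hs w (by rw [hw]; rfl) (by rw [hw]; rfl)
  rw [hw] at this
  simp at this

theorem exists_selector : ∀ {P : N}, P.RO → ∀ {a}, a ∈ P.vars →
    ∃ w, ∀ c, P.evalL (Function.update w a c) = c
  | lit n b, _, a, ha => by
      simp [vars] at ha
      subst ha
      exact ⟨fun _ => true, fun c => by simp [evalL]⟩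
  | conj l r, hro, a, ha => by
      rcases Finset.mem_union.mp ha with ha | ha
      · obtain ⟨w, hw⟩ := exists_selector hro.1 ha
        have hanr : a ∉ r.vars := fun hc => Finset.disjoint_left.mp hro.2.2 ha hc
        refine ⟨fun n => if n ∈ r.vars then true else w n, fun c => ?_⟩
        have hr : r.evalL (Function.update (fun n => if n ∈ r.vars then true else w n) a c)
            = true := by
          apply evalL_true
          intro n hn
          rw [Function.update_of_ne (by rintro rfl; exact hanr hn)]
          simp [hn]
        have hl : l.evalL (Function.update (fun n => if n ∈ r.vars then true else w n) a c)
            = l.evalL (Function.update w a c) := by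
          apply evalL_congr
          intro n hn
          by_cases hna : n = a
          · subst hna; simp
          · have : n ∉ r.vars := fun hc => Finset.disjoint_left.mp hro.2.2 hn hc
            simp [Function.update_of_ne hna, this]
        simp only [evalL]; rw [hr, hl, hw c]; simp
      · obtain ⟨w, hw⟩ := exists_selector hro.2.1 ha
        have hanl : a ∉ l.vars := fun hc => Finset.disjoint_left.mp hro.2.2 hc ha
        refine ⟨fun n => if n ∈ l.vars then true else w n, fun c => ?_⟩
        have hlt : l.evalL (Function.update (fun n => if n ∈ l.vars then true else w n) a c)
            = true := by
          apply evalL_true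
          intro n hn
          rw [Function.update_of_ne (by rintro rfl; exact hanl hn)]
          simp [hn]
        have hr : r.evalL (Function.update (fun n => if n ∈ l.vars then true else w n) a c)
            = r.evalL (Function.update w a c) := by
          apply evalL_congr
          intro n hn
          by_cases hna : n = a
          · subst hna; simp
          · have : n ∉ l.vars := fun hc => Finset.disjoint_left.mp hro.2.2 hc hn
            simp [Function.update_of_ne hna, this]
        simp only [evalL]; rw [hlt, hr, hw c]; simp
  | disj l r, hro, a, ha => by
      rcases Finset.mem_union.mp ha with ha | ha
      · obtain ⟨w, hw⟩ := exists_selector hro.1 ha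
        have hanr : a ∉ r.vars := fun hc => Finset.disjoint_left.mp hro.2.2 ha hc
        refine ⟨fun n => if n ∈ r.vars then false else w n, fun c => ?_⟩
        have hr : r.evalL (Function.update (fun n => if n ∈ r.vars then false else w n) a c)
            = false := by
          apply evalL_false
          intro n hn
          rw [Function.update_of_ne (by rintro rfl; exact hanr hn)]
          simp [hn]
        have hl : l.evalL (Function.update (fun n => if n ∈ r.vars then false else w n) a c)
            = l.evalL (Function.update w a c) := by
          apply evalL_congr
          intro n hn
          by_cases hna : n = a
          · subst hna; simp
          · have : n ∉ r.vars := fun hc => Finset.disjoint_left.mp hro.2.2 hn hc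
            simp [Function.update_of_ne hna, this]
        simp only [evalL]; rw [hr, hl, hw c]; simp
      · obtain ⟨w, hw⟩ := exists_selector hro.2.1 ha
        have hanl : a ∉ l.vars := fun hc => Finset.disjoint_left.mp hro.2.2 hc ha
        refine ⟨fun n => if n ∈ l.vars then false else w n, fun c => ?_⟩
        have hlt : l.evalL (Function.update (fun n => if n ∈ l.vars then false else w n) a c)
            = false := by
          apply evalL_false
          intro n hn
          rw [Function.update_of_ne (by rintro rfl; exact hanl hn)]
          simp [hn]
        have hr : r.evalL (Function.update (fun n => if n ∈ l.vars then false else w n) a c)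
            = r.evalL (Function.update w a c) := by
          apply evalL_congr
          intro n hn
          by_cases hna : n = a
          · subst hna; simp
          · have : n ∉ l.vars := fun hc => Finset.disjoint_left.mp hro.2.2 hc hn
            simp [Function.update_of_ne hna, this]
        simp only [evalL]; rw [hlt, hr, hw c]; simp

end N
namespace N

theorem AndPair_ext {f g : (ℕ → Bool) → Bool} {a b} (h : ∀ w, f w = g w) :
    AndPair f a b → AndPair g a b := fun ⟨w, hw⟩ => ⟨w, fun x y => (h _) ▸ hw x y⟩

theorem OrPair_ext {f g : (ℕ → Bool) → Bool} {a b} (h : ∀ w, f w = g w) :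
    OrPair f a b → OrPair g a b := fun ⟨w, hw⟩ => ⟨w, fun x y => (h _) ▸ hw x y⟩

theorem ShapeAnd_ext {f g : (ℕ → Bool) → Bool} {a b} (h : ∀ w, f w = g w) :
    ShapeAnd f a b → ShapeAnd g a b := fun hs w h1 h2 =>
  (h _) ▸ hs w ((h _).symm ▸ h1) ((h _).symm ▸ h2)

theorem ShapeOr_ext {f g : (ℕ → Bool) → Bool} {a b} (h : ∀ w, f w = g w) :
    ShapeOr f a b → ShapeOr g a b := fun hs w h1 => by
  rcases hs w ((h _).symm ▸ h1) with h2 | h2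
  · exact Or.inl ((h _) ▸ h2)
  · exact Or.inr ((h _) ▸ h2)

/-- changing the `b`-coordinate doesn't matter if `b ∉ vars`. -/
theorem evalL_upd2_snd {P : N} {w a x b y y'} (hb : b ∉ P.vars) :
    P.evalL (upd2 w a x b y) = P.evalL (upd2 w a x b y') := by
  apply evalL_congr
  intro n hn
  have hnb : n ≠ b := fun h => hb (h ▸ hn)
  by_cases hna : n = a
  · subst hna; rw [upd2_a hnb, upd2_a hnb]
  · rw [upd2_other hna hnb, upd2_other hna hnb]

theorem evalL_upd2_fst {P : N} {w a x x' b y} (ha : a ∉ P.vars) :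
    P.evalL (upd2 w a x b y) = P.evalL (upd2 w a x' b y) := by
  apply evalL_congr
  intro n hn
  have hna : n ≠ a := fun h => ha (h ▸ hn)
  by_cases hnb : n = b
  · subst hnb; rw [upd2_b, upd2_b]
  · rw [upd2_other hna hnb, upd2_other hna hnb]

/-! ### cross lemmas -/

theorem crossConj {l r : N} (hro : (conj l r).RO) {a b} (ha : a ∈ l.vars) (hb : b ∈ r.vars) :
    AndPair (fun w => (conj l r).evalL w) a b ∧ ShapeAnd (fun w => (conj l r).evalL w) a b := by
  have hd := hro.2.2
  have hab : a ≠ b := fun h => Finset.disjoint_left.mp hd ha (h ▸ hb)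
  have hbl : b ∉ l.vars := fun h => Finset.disjoint_left.mp hd h hb
  have har : a ∉ r.vars := fun h => Finset.disjoint_left.mp hd ha h
  constructor
  · obtain ⟨wl, hwl⟩ := exists_selector hro.1 ha
    obtain ⟨wr, hwr⟩ := exists_selector hro.2.1 hb
    refine ⟨fun n => if n ∈ l.vars then wl n else wr n, fun x y => ?_⟩
    have h1 : l.evalL (upd2 (fun n => if n ∈ l.vars then wl n else wr n) a x b y)
        = l.evalL (Function.update wl a x) := by
      apply evalL_congr
      intro n hn
      have hnb : n ≠ b := fun h => hbl (h ▸ hn)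
      by_cases hna : n = a
      · subst hna; rw [upd2_a hab, Function.update_self]
      · rw [upd2_other hna hnb, Function.update_of_ne hna]
        simp [hn]
    have h2 : r.evalL (upd2 (fun n => if n ∈ l.vars then wl n else wr n) a x b y)
        = r.evalL (Function.update wr b y) := by
      apply evalL_congr
      intro n hn
      have hna : n ≠ a := fun h => har (h ▸ hn)
      have hnl : n ∉ l.vars := fun h => Finset.disjoint_left.mp hd h hn
      by_cases hnb : n = b
      · subst hnb; rw [upd2_b, Function.update_self]
      · rw [upd2_other hna hnb, Function.update_of_ne hnb]
        simp [hnl]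
    simp only [evalL]
    rw [h1, h2, hwl x, hwr y]
  · intro w h10 h01
    simp only [evalL, Bool.and_eq_true] at h10 h01 ⊢
    constructor
    · rw [evalL_upd2_snd (y' := true) hbl]
      exact h01.1
    · rw [evalL_upd2_fst (x' := true) har]
      exact h10.2

theorem crossDisj {l r : N} (hro : (disj l r).RO) {a b} (ha : a ∈ l.vars) (hb : b ∈ r.vars) :
    OrPair (fun w => (disj l r).evalL w) a b ∧ ShapeOr (fun w => (disj l r).evalL w) a b := by
  have hd := hro.2.2
  have hab : a ≠ b := fun h => Finset.disjoint_left.mp hd ha (h ▸ hb)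
  have hbl : b ∉ l.vars := fun h => Finset.disjoint_left.mp hd h hb
  have har : a ∉ r.vars := fun h => Finset.disjoint_left.mp hd ha h
  constructor
  · obtain ⟨wl, hwl⟩ := exists_selector hro.1 ha
    obtain ⟨wr, hwr⟩ := exists_selector hro.2.1 hb
    refine ⟨fun n => if n ∈ l.vars then wl n else wr n, fun x y => ?_⟩
    have h1 : l.evalL (upd2 (fun n => if n ∈ l.vars then wl n else wr n) a x b y)
        = l.evalL (Function.update wl a x) := by
      apply evalL_congr
      intro n hn
      have hnb : n ≠ b := fun h => hbl (h ▸ hn)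
      by_cases hna : n = a
      · subst hna; rw [upd2_a hab, Function.update_self]
      · rw [upd2_other hna hnb, Function.update_of_ne hna]
        simp [hn]
    have h2 : r.evalL (upd2 (fun n => if n ∈ l.vars then wl n else wr n) a x b y)
        = r.evalL (Function.update wr b y) := by
      apply evalL_congr
      intro n hn
      have hna : n ≠ a := fun h => har (h ▸ hn)
      have hnl : n ∉ l.vars := fun h => Finset.disjoint_left.mp hd h hn
      by_cases hnb : n = b
      · subst hnb; rw [upd2_b, Function.update_self]
      · rw [upd2_other hna hnb, Function.update_of_ne hnb]
        simp [hnl]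
    simp only [evalL]
    rw [h1, h2, hwl x, hwr y]
  · intro w h11
    simp only [evalL, Bool.or_eq_true] at h11 ⊢
    rcases h11 with h | h
    · left; left
      rw [evalL_upd2_snd (y' := true) hbl]
      exact h
    · right; right
      rw [evalL_upd2_fst (x' := true) har]
      exact h

end N
namespace N

def PairAnd (f : (ℕ → Bool) → Bool) (a b : ℕ) : Prop := AndPair f a b ∧ ShapeAnd f a b
def PairOr (f : (ℕ → Bool) → Bool) (a b : ℕ) : Prop := OrPair f a b ∧ ShapeOr f a b

theorem evalL_upd2_both {P : N} {w a x x' b y y'} (ha : a ∉ P.vars) (hb : b ∉ P.vars) :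
    P.evalL (upd2 w a x b y) = P.evalL (upd2 w a x' b y') := by
  rw [evalL_upd2_fst (x' := x') ha, evalL_upd2_snd (y' := y') hb]

section Lift
variable {l r : N} {a b : ℕ}

/-- key congruence: updating coordinates outside a formula's vars does nothing,
and extension by `if`-override doesn't change evaluation inside. -/
private theorem ext_eval (hdl : Disjoint l.vars r.vars) (hab : a ≠ b) {w : ℕ → Bool} {c x y} :
    l.evalL (upd2 (fun n => if n ∈ r.vars then c else w n) a x b y) = l.evalL (upd2 w a x b y) := by
  apply evalL_congr
  intro n hn
  have hnr : n ∉ r.vars := fun h => Finset.disjoint_left.mp hdl hn h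
  by_cases hna : n = a
  · subst hna; rw [upd2_a hab, upd2_a hab]
  · by_cases hnb : n = b
    · subst hnb; rw [upd2_b, upd2_b]
    · rw [upd2_other hna hnb, upd2_other hna hnb]
      simp [hnr]

private theorem ext_const (hdl : Disjoint l.vars r.vars) (ha : a ∈ l.vars) (hb : b ∈ l.vars)
    {w : ℕ → Bool} {c x y} :
    r.evalL (upd2 (fun n => if n ∈ r.vars then c else w n) a x b y) = c := by
  have har : a ∉ r.vars := fun h => Finset.disjoint_left.mp hdl ha h
  have hbr : b ∉ r.vars := fun h => Finset.disjoint_left.mp hdl hb h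
  cases c
  · apply evalL_false
    intro n hn
    rw [upd2_other (by rintro rfl; exact har hn) (by rintro rfl; exact hbr hn)]
    simp [hn]
  · apply evalL_true
    intro n hn
    rw [upd2_other (by rintro rfl; exact har hn) (by rintro rfl; exact hbr hn)]
    simp [hn]

variable (hro : (conj l r).RO) (ha : a ∈ l.vars) (hb : b ∈ l.vars) (hab : a ≠ b)

theorem liftConj_pairAnd (hro : (conj l r).RO) (ha : a ∈ l.vars) (hb : b ∈ l.vars)
    (hab : a ≠ b) (h : PairAnd (fun w => l.evalL w) a b) :
    PairAnd (fun w => (conj l r).evalL w) a b := by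
  have hd := hro.2.2
  have har : a ∉ r.vars := fun hc => Finset.disjoint_left.mp hd ha hc
  have hbr : b ∉ r.vars := fun hc => Finset.disjoint_left.mp hd hb hc
  constructor
  · obtain ⟨w, hw⟩ := h.1
    refine ⟨fun n => if n ∈ r.vars then true else w n, fun x y => ?_⟩
    simp only [evalL]
    rw [ext_eval hd hab, ext_const hd ha hb, Bool.and_true]
    exact hw x y
  · intro w h10 h01
    simp only [evalL, Bool.and_eq_true] at h10 h01 ⊢
    refine ⟨h.2 w h10.1 h01.1, ?_⟩
    rw [evalL_upd2_both (x' := true) (y' := false) har hbr]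
    exact h10.2

theorem liftConj_pairOr (hro : (conj l r).RO) (ha : a ∈ l.vars) (hb : b ∈ l.vars)
    (hab : a ≠ b) (h : PairOr (fun w => l.evalL w) a b) :
    PairOr (fun w => (conj l r).evalL w) a b := by
  have hd := hro.2.2
  have har : a ∉ r.vars := fun hc => Finset.disjoint_left.mp hd ha hc
  have hbr : b ∉ r.vars := fun hc => Finset.disjoint_left.mp hd hb hc
  constructor
  · obtain ⟨w, hw⟩ := h.1
    refine ⟨fun n => if n ∈ r.vars then true else w n, fun x y => ?_⟩
    simp only [evalL]
    rw [ext_eval hd hab, ext_const hd ha hb, Bool.and_true]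
    exact hw x y
  · intro w h11
    simp only [evalL, Bool.and_eq_true] at h11 ⊢
    rcases h.2 w h11.1 with h2 | h2
    · exact Or.inl ⟨h2, by
        rw [evalL_upd2_both (x' := true) (y' := true) har hbr]; exact h11.2⟩
    · exact Or.inr ⟨h2, by
        rw [evalL_upd2_both (x' := true) (y' := true) har hbr]; exact h11.2⟩

theorem liftDisj_pairAnd (hro : (disj l r).RO) (ha : a ∈ l.vars) (hb : b ∈ l.vars)
    (hab : a ≠ b) (h : PairAnd (fun w => l.evalL w) a b) :
    PairAnd (fun w => (disj l r).evalL w) a b := by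
  have hd := hro.2.2
  have har : a ∉ r.vars := fun hc => Finset.disjoint_left.mp hd ha hc
  have hbr : b ∉ r.vars := fun hc => Finset.disjoint_left.mp hd hb hc
  constructor
  · obtain ⟨w, hw⟩ := h.1
    refine ⟨fun n => if n ∈ r.vars then false else w n, fun x y => ?_⟩
    simp only [evalL]
    rw [ext_eval hd hab, ext_const hd ha hb, Bool.or_false]
    exact hw x y
  · intro w h10 h01
    simp only [evalL, Bool.or_eq_true] at h10 h01 ⊢
    rcases h10 with h10 | h10
    · rcases h01 with h01 | h01
      · exact Or.inl (h.2 w h10 h01)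
      · refine Or.inr ?_
        rw [evalL_upd2_both (x' := false) (y' := true) har hbr]
        exact h01
    · refine Or.inr ?_
      rw [evalL_upd2_both (x' := true) (y' := false) har hbr]
      exact h10

theorem liftDisj_pairOr (hro : (disj l r).RO) (ha : a ∈ l.vars) (hb : b ∈ l.vars)
    (hab : a ≠ b) (h : PairOr (fun w => l.evalL w) a b) :
    PairOr (fun w => (disj l r).evalL w) a b := by
  have hd := hro.2.2
  have har : a ∉ r.vars := fun hc => Finset.disjoint_left.mp hd ha hc
  have hbr : b ∉ r.vars := fun hc => Finset.disjoint_left.mp hd hb hc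
  constructor
  · obtain ⟨w, hw⟩ := h.1
    refine ⟨fun n => if n ∈ r.vars then false else w n, fun x y => ?_⟩
    simp only [evalL]
    rw [ext_eval hd hab, ext_const hd ha hb, Bool.or_false]
    exact hw x y
  · intro w h11
    simp only [evalL, Bool.or_eq_true] at h11 ⊢
    rcases h11 with h11 | h11
    · rcases h.2 w h11 with h2 | h2
      · exact Or.inl (Or.inl h2)
      · exact Or.inr (Or.inl h2)
    · refine Or.inl (Or.inr ?_)
      rw [evalL_upd2_both (x' := true) (y' := true) har hbr]
      exact h11

end Lift

theorem conj_comm_eval (l r : N) (w : ℕ → Bool) :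
    (conj l r).evalL w = (conj r l).evalL w := by simp [evalL, Bool.and_comm]

theorem disj_comm_eval (l r : N) (w : ℕ → Bool) :
    (disj l r).evalL w = (disj r l).evalL w := by simp [evalL, Bool.or_comm]

theorem RO.conj_comm {l r : N} (h : (conj l r).RO) : (conj r l).RO :=
  ⟨h.2.1, h.1, h.2.2.symm⟩

theorem RO.disj_comm {l r : N} (h : (disj l r).RO) : (disj r l).RO :=
  ⟨h.2.1, h.1, h.2.2.symm⟩

theorem PairAnd_ext {f g : (ℕ → Bool) → Bool} {a b} (h : ∀ w, f w = g w) :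
    PairAnd f a b → PairAnd g a b := fun hp => ⟨AndPair_ext h hp.1, ShapeAnd_ext h hp.2⟩

theorem PairOr_ext {f g : (ℕ → Bool) → Bool} {a b} (h : ∀ w, f w = g w) :
    PairOr f a b → PairOr g a b := fun hp => ⟨OrPair_ext h hp.1, ShapeOr_ext h hp.2⟩

end N
namespace N

def SN (P Q : N) : Prop := SderN P.toForm Q.toForm

theorem SN.refl (P : N) : SN P P := SderN.refl _
theorem SN.symm {P Q : N} (h : SN P Q) : SN Q P := SderN.symm h
theorem SN.trans {P Q R : N} (h : SN P Q) (h' : SN Q R) : SN P R := SderN.trans h h'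
theorem SN.congConj {P Q R S : N} (h : SN P Q) (h' : SN R S) :
    SN (conj P R) (conj Q S) := SderN.congAnd h h'
theorem SN.congDisj {P Q R S : N} (h : SN P Q) (h' : SN R S) :
    SN (disj P R) (disj Q S) := SderN.congOr h h'
theorem SN.assocConj (P Q R : N) : SN (conj (conj P Q) R) (conj P (conj Q R)) :=
  SderN.assocAnd _ _ _
theorem SN.assocDisj (P Q R : N) : SN (disj (disj P Q) R) (disj P (disj Q R)) :=
  SderN.assocOr _ _ _
theorem SN.commConj (P Q : N) : SN (conj P Q) (conj Q P) := SderN.commAnd _ _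
theorem SN.commDisj (P Q : N) : SN (disj P Q) (disj Q P) := SderN.commOr _ _

def andFactors : N → List N
  | conj l r => andFactors l ++ andFactors r
  | t => [t]

def orFactors : N → List N
  | disj l r => orFactors l ++ orFactors r
  | t => [t]

theorem andFactors_ne_nil : ∀ P : N, andFactors P ≠ []
  | lit _ _ => by simp [andFactors]
  | disj _ _ => by simp [andFactors]
  | conj l r => by
      simp only [andFactors]
      intro h
      exact andFactors_ne_nil l (List.append_eq_nil_iff.mp h).1

theorem orFactors_ne_nil : ∀ P : N, orFactors P ≠ []
  | lit _ _ => by simp [orFactors]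
  | conj _ _ => by simp [orFactors]
  | disj l r => by
      simp only [orFactors]
      intro h
      exact orFactors_ne_nil l (List.append_eq_nil_iff.mp h).1

def listAnd : List N → N
  | [] => lit 0 true
  | [P] => P
  | P :: l => conj P (listAnd (l))

def listOr : List N → N
  | [] => lit 0 true
  | [P] => P
  | P :: l => disj P (listOr (l))

theorem listAnd_cons (P : N) {l : List N} (h : l ≠ []) :
    listAnd (P :: l) = conj P (listAnd l) := by
  cases l with
  | nil => exact absurd rfl h
  | cons a l => rfl

theorem listOr_cons (P : N) {l : List N} (h : l ≠ []) :
    listOr (P :: l) = disj P (listOr l) := by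
  cases l with
  | nil => exact absurd rfl h
  | cons a l => rfl

theorem sn_listAnd_append : ∀ {xs : List N}, ∀ {ys : List N}, xs ≠ [] → ys ≠ [] →
    SN (listAnd (xs ++ ys)) (conj (listAnd xs) (listAnd ys))
  | [], _, hx, _ => absurd rfl hx
  | [a], ys, _, hy => by
      rw [List.singleton_append, listAnd_cons a hy]
      exact SN.refl _
  | a :: b :: xs, ys, _, hy => by
      rw [List.cons_append, listAnd_cons a (by simp), listAnd_cons a (by simp)]
      refine SN.trans (SN.congConj (SN.refl a) (sn_listAnd_append (by simp) hy)) ?_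
      exact (SN.assocConj a (listAnd (b :: xs)) (listAnd ys)).symm

theorem sn_listOr_append : ∀ {xs : List N}, ∀ {ys : List N}, xs ≠ [] → ys ≠ [] →
    SN (listOr (xs ++ ys)) (disj (listOr xs) (listOr ys))
  | [], _, hx, _ => absurd rfl hx
  | [a], ys, _, hy => by
      rw [List.singleton_append, listOr_cons a hy]
      exact SN.refl _
  | a :: b :: xs, ys, _, hy => by
      rw [List.cons_append, listOr_cons a (by simp), listOr_cons a (by simp)]
      refine SN.trans (SN.congDisj (SN.refl a) (sn_listOr_append (by simp) hy)) ?_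
      exact (SN.assocDisj a (listOr (b :: xs)) (listOr ys)).symm

theorem sn_flattenAnd : ∀ P : N, SN P (listAnd (andFactors P))
  | lit n b => SN.refl _
  | disj l r => SN.refl _
  | conj l r => by
      refine SN.trans (SN.congConj (sn_flattenAnd l) (sn_flattenAnd r)) ?_
      exact (sn_listAnd_append (andFactors_ne_nil l) (andFactors_ne_nil r)).symm

theorem sn_flattenOr : ∀ P : N, SN P (listOr (orFactors P))
  | lit n b => SN.refl _
  | conj l r => SN.refl _
  | disj l r => by
      refine SN.trans (SN.congDisj (sn_flattenOr l) (sn_flattenOr r)) ?_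
      exact (sn_listOr_append (orFactors_ne_nil l) (orFactors_ne_nil r)).symm

theorem sn_listAnd_perm {xs ys : List N} (h : xs.Perm ys) :
    SN (listAnd xs) (listAnd ys) := by
  induction h with
  | nil => exact SN.refl _
  | cons a p ih =>
      rename_i l₁ l₂
      cases l₁ with
      | nil =>
          rw [List.Perm.eq_nil p.symm]
          exact SN.refl _
      | cons c l =>
          have h₂ : l₂ ≠ [] := fun h => by simp [h, List.Perm.eq_nil] at p
          rw [listAnd_cons a (by simp), listAnd_cons a h₂]
          exact SN.congConj (SN.refl a) ih
  | swap a b l =>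
      cases l with
      | nil => exact SN.commConj b a
      | cons c l =>
          rw [listAnd_cons b (by simp), listAnd_cons a (by simp),
            listAnd_cons a (by simp), listAnd_cons b (by simp)]
          refine SN.trans (SN.assocConj b a (listAnd (c :: l))).symm ?_
          refine SN.trans (SN.congConj (SN.commConj b a) (SN.refl _)) ?_
          exact SN.assocConj a b (listAnd (c :: l))
  | trans _ _ ih₁ ih₂ => exact ih₁.trans ih₂

theorem sn_listOr_perm {xs ys : List N} (h : xs.Perm ys) :
    SN (listOr xs) (listOr ys) := by
  induction h with
  | nil => exact SN.refl _
  | cons a p ih =>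
      rename_i l₁ l₂
      cases l₁ with
      | nil =>
          rw [List.Perm.eq_nil p.symm]
          exact SN.refl _
      | cons c l =>
          have h₂ : l₂ ≠ [] := fun h => by simp [h, List.Perm.eq_nil] at p
          rw [listOr_cons a (by simp), listOr_cons a h₂]
          exact SN.congDisj (SN.refl a) ih
  | swap a b l =>
      cases l with
      | nil => exact SN.commDisj b a
      | cons c l =>
          rw [listOr_cons b (by simp), listOr_cons a (by simp),
            listOr_cons a (by simp), listOr_cons b (by simp)]
          refine SN.trans (SN.assocDisj b a (listOr (c :: l))).symm ?_
          refine SN.trans (SN.congDisj (SN.commDisj b a) (SN.refl _)) ?_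
          exact SN.assocDisj a b (listOr (c :: l))
  | trans _ _ ih₁ ih₂ => exact ih₁.trans ih₂

end N
namespace N

theorem andFactors_eq_self : ∀ {P : N}, (∀ l r, P ≠ conj l r) → andFactors P = [P]
  | lit _ _, _ => rfl
  | disj _ _, _ => rfl
  | conj l r, h => absurd rfl (h l r)

theorem orFactors_eq_self : ∀ {P : N}, (∀ l r, P ≠ disj l r) → orFactors P = [P]
  | lit _ _, _ => rfl
  | conj _ _, _ => rfl
  | disj l r, h => absurd rfl (h l r)

theorem andFactors_props : ∀ {P F : N}, F ∈ andFactors P →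
    (P.RO → F.RO) ∧ F.vars ⊆ P.vars ∧ F.size ≤ P.size ∧
      (∀ m c, F.HasLeaf m c → P.HasLeaf m c) ∧ (∀ l r, F ≠ conj l r)
  | lit n b, F, h => by
      simp [andFactors] at h
      subst h
      exact ⟨id, le_refl _, le_refl _, fun _ _ => id, by simp⟩
  | disj l r, F, h => by
      simp [andFactors] at h
      subst h
      exact ⟨id, le_refl _, le_refl _, fun _ _ => id, by simp⟩
  | conj l r, F, h => by
      rcases List.mem_append.mp h with h | h
      · obtain ⟨h1, h2, h3, h4, h5⟩ := andFactors_props h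
        exact ⟨fun hro => h1 hro.1,
          h2.trans (Finset.subset_union_left),
          h3.trans (by simp [size]; omega),
          fun m c hl => Or.inl (h4 m c hl), h5⟩
      · obtain ⟨h1, h2, h3, h4, h5⟩ := andFactors_props h
        exact ⟨fun hro => h1 hro.2.1,
          h2.trans (Finset.subset_union_right),
          h3.trans (by simp [size]; omega),
          fun m c hl => Or.inr (h4 m c hl), h5⟩

theorem orFactors_props : ∀ {P F : N}, F ∈ orFactors P →
    (P.RO → F.RO) ∧ F.vars ⊆ P.vars ∧ F.size ≤ P.size ∧
      (∀ m c, F.HasLeaf m c → P.HasLeaf m c) ∧ (∀ l r, F ≠ disj l r)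
  | lit n b, F, h => by
      simp [orFactors] at h
      subst h
      exact ⟨id, le_refl _, le_refl _, fun _ _ => id, by simp⟩
  | conj l r, F, h => by
      simp [orFactors] at h
      subst h
      exact ⟨id, le_refl _, le_refl _, fun _ _ => id, by simp⟩
  | disj l r, F, h => by
      rcases List.mem_append.mp h with h | h
      · obtain ⟨h1, h2, h3, h4, h5⟩ := orFactors_props h
        exact ⟨fun hro => h1 hro.1,
          h2.trans (Finset.subset_union_left),
          h3.trans (by simp [size]; omega),
          fun m c hl => Or.inl (h4 m c hl), h5⟩
      · obtain ⟨h1, h2, h3, h4, h5⟩ := orFactors_props h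
        exact ⟨fun hro => h1 hro.2.1,
          h2.trans (Finset.subset_union_right),
          h3.trans (by simp [size]; omega),
          fun m c hl => Or.inr (h4 m c hl), h5⟩

theorem andFactors_size_lt {l r F : N} (h : F ∈ andFactors (conj l r)) :
    F.size < (conj l r).size := by
  rcases List.mem_append.mp h with h | h
  · have := (andFactors_props h).2.2.1
    have hr := size_pos r
    simp only [size]; omega
  · have := (andFactors_props h).2.2.1
    have hl := size_pos l
    simp only [size]; omega

theorem orFactors_size_lt {l r F : N} (h : F ∈ orFactors (disj l r)) :
    F.size < (disj l r).size := by
  rcases List.mem_append.mp h with h | h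
  · have := (orFactors_props h).2.2.1
    have hr := size_pos r
    simp only [size]; omega
  · have := (orFactors_props h).2.2.1
    have hl := size_pos l
    simp only [size]; omega

theorem exists_andFactor : ∀ {P : N} {a}, a ∈ P.vars → ∃ F ∈ andFactors P, a ∈ F.vars
  | lit n b, a, ha => ⟨lit n b, by simp [andFactors], ha⟩
  | disj l r, a, ha => ⟨disj l r, by simp [andFactors], ha⟩
  | conj l r, a, ha => by
      rcases Finset.mem_union.mp ha with ha | ha
      · obtain ⟨F, h1, h2⟩ := exists_andFactor ha
        exact ⟨F, List.mem_append.mpr (Or.inl h1), h2⟩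
      · obtain ⟨F, h1, h2⟩ := exists_andFactor ha
        exact ⟨F, List.mem_append.mpr (Or.inr h1), h2⟩

theorem exists_orFactor : ∀ {P : N} {a}, a ∈ P.vars → ∃ F ∈ orFactors P, a ∈ F.vars
  | lit n b, a, ha => ⟨lit n b, by simp [orFactors], ha⟩
  | conj l r, a, ha => ⟨conj l r, by simp [orFactors], ha⟩
  | disj l r, a, ha => by
      rcases Finset.mem_union.mp ha with ha | ha
      · obtain ⟨F, h1, h2⟩ := exists_orFactor ha
        exact ⟨F, List.mem_append.mpr (Or.inl h1), h2⟩
      · obtain ⟨F, h1, h2⟩ := exists_orFactor ha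
        exact ⟨F, List.mem_append.mpr (Or.inr h1), h2⟩

theorem andFactors_pairwise : ∀ {P : N}, P.RO →
    (andFactors P).Pairwise (fun F G => Disjoint F.vars G.vars)
  | lit n b, _ => by simp [andFactors]
  | disj l r, _ => by simp [andFactors]
  | conj l r, hro => by
      refine List.pairwise_append.mpr ⟨andFactors_pairwise hro.1, andFactors_pairwise hro.2.1,
        fun F hF G hG => ?_⟩
      exact hro.2.2.mono (andFactors_props hF).2.1 (andFactors_props hG).2.1

theorem orFactors_pairwise : ∀ {P : N}, P.RO →
    (orFactors P).Pairwise (fun F G => Disjoint F.vars G.vars)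
  | lit n b, _ => by simp [orFactors]
  | conj l r, _ => by simp [orFactors]
  | disj l r, hro => by
      refine List.pairwise_append.mpr ⟨orFactors_pairwise hro.1, orFactors_pairwise hro.2.1,
        fun F hF G hG => ?_⟩
      exact hro.2.2.mono (orFactors_props hF).2.1 (orFactors_props hG).2.1

theorem andFactor_eval : ∀ {P F : N}, P.RO → F ∈ andFactors P → ∀ w,
    P.evalL (fun n => if n ∈ F.vars then w n else true) = F.evalL w
  | lit n b, F, _, h, w => by
      simp [andFactors] at h
      subst h
      exact evalL_congr fun n hn => by simp [hn]
  | disj l r, F, _, h, w => by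
      simp [andFactors] at h
      subst h
      exact evalL_congr fun n hn => by simp [hn]
  | conj l r, F, hro, h, w => by
      rcases List.mem_append.mp h with h | h
      · have hsub := (andFactors_props h).2.1
        have hr : r.evalL (fun n => if n ∈ F.vars then w n else true) = true := by
          apply evalL_true
          intro n hn
          have : n ∉ F.vars := fun hc =>
            Finset.disjoint_left.mp hro.2.2 (hsub hc) hn
          simp [this]
        simp only [evalL]
        rw [hr, andFactor_eval hro.1 h w, Bool.and_true]
      · have hsub := (andFactors_props h).2.1
        have hl : l.evalL (fun n => if n ∈ F.vars then w n else true) = true := by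
          apply evalL_true
          intro n hn
          have : n ∉ F.vars := fun hc =>
            Finset.disjoint_left.mp hro.2.2 hn (hsub hc)
          simp [this]
        simp only [evalL]
        rw [hl, andFactor_eval hro.2.1 h w, Bool.true_and]

theorem orFactor_eval : ∀ {P F : N}, P.RO → F ∈ orFactors P → ∀ w,
    P.evalL (fun n => if n ∈ F.vars then w n else false) = F.evalL w
  | lit n b, F, _, h, w => by
      simp [orFactors] at h
      subst h
      exact evalL_congr fun n hn => by simp [hn]
  | conj l r, F, _, h, w => by
      simp [orFactors] at h
      subst h
      exact evalL_congr fun n hn => by simp [hn]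
  | disj l r, F, hro, h, w => by
      rcases List.mem_append.mp h with h | h
      · have hsub := (orFactors_props h).2.1
        have hr : r.evalL (fun n => if n ∈ F.vars then w n else false) = false := by
          apply evalL_false
          intro n hn
          have : n ∉ F.vars := fun hc =>
            Finset.disjoint_left.mp hro.2.2 (hsub hc) hn
          simp [this]
        simp only [evalL]
        rw [hr, orFactor_eval hro.1 h w, Bool.or_false]
      · have hsub := (orFactors_props h).2.1
        have hl : l.evalL (fun n => if n ∈ F.vars then w n else false) = false := by
          apply evalL_false
          intro n hn
          have : n ∉ F.vars := fun hc =>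
            Finset.disjoint_left.mp hro.2.2 hn (hsub hc)
          simp [this]
        simp only [evalL]
        rw [hl, orFactor_eval hro.2.1 h w, Bool.false_or]

theorem andFactor_pairOr : ∀ {P F : N}, P.RO → F ∈ andFactors P → ∀ {a b},
    a ∈ F.vars → b ∈ F.vars → a ≠ b →
    PairOr (fun w => F.evalL w) a b → PairOr (fun w => P.evalL w) a b
  | lit n c, F, _, h, a, b, _, _, _, hp => by
      simp [andFactors] at h; subst h; exact hp
  | disj l r, F, _, h, a, b, _, _, _, hp => by
      simp [andFactors] at h; subst h; exact hp
  | conj l r, F, hro, h, a, b, ha, hb, hab, hp => by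
      rcases List.mem_append.mp h with h | h
      · have hsub := (andFactors_props h).2.1
        exact liftConj_pairOr hro (hsub ha) (hsub hb) hab
          (andFactor_pairOr hro.1 h ha hb hab hp)
      · have hsub := (andFactors_props h).2.1
        refine PairOr_ext (conj_comm_eval r l) ?_
        exact liftConj_pairOr hro.conj_comm (hsub ha) (hsub hb) hab
          (andFactor_pairOr hro.2.1 h ha hb hab hp)

theorem orFactor_pairAnd : ∀ {P F : N}, P.RO → F ∈ orFactors P → ∀ {a b},
    a ∈ F.vars → b ∈ F.vars → a ≠ b →
    PairAnd (fun w => F.evalL w) a b → PairAnd (fun w => P.evalL w) a b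
  | lit n c, F, _, h, a, b, _, _, _, hp => by
      simp [orFactors] at h; subst h; exact hp
  | conj l r, F, _, h, a, b, _, _, _, hp => by
      simp [orFactors] at h; subst h; exact hp
  | disj l r, F, hro, h, a, b, ha, hb, hab, hp => by
      rcases List.mem_append.mp h with h | h
      · have hsub := (orFactors_props h).2.1
        exact liftDisj_pairAnd hro (hsub ha) (hsub hb) hab
          (orFactor_pairAnd hro.1 h ha hb hab hp)
      · have hsub := (orFactors_props h).2.1
        refine PairAnd_ext (disj_comm_eval r l) ?_
        exact liftDisj_pairAnd hro.disj_comm (hsub ha) (hsub hb) hab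
          (orFactor_pairAnd hro.2.1 h ha hb hab hp)

theorem factor_or_pairAnd : ∀ {P : N}, P.RO → ∀ {a b}, a ∈ P.vars → b ∈ P.vars → a ≠ b →
    (∃ F ∈ andFactors P, a ∈ F.vars ∧ b ∈ F.vars) ∨ PairAnd (fun w => P.evalL w) a b
  | lit n c, _, a, b, ha, hb, hab => Or.inl ⟨lit n c, by simp [andFactors], ha, hb⟩
  | disj l r, _, a, b, ha, hb, hab => Or.inl ⟨disj l r, by simp [andFactors], ha, hb⟩
  | conj l r, hro, a, b, ha, hb, hab => by
      rcases Finset.mem_union.mp ha with ha | ha <;> rcases Finset.mem_union.mp hb with hb | hb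
      · rcases factor_or_pairAnd hro.1 ha hb hab with ⟨F, h1, h2⟩ | hp
        · exact Or.inl ⟨F, List.mem_append.mpr (Or.inl h1), h2⟩
        · exact Or.inr (liftConj_pairAnd hro ha hb hab hp)
      · exact Or.inr (crossConj hro ha hb)
      · refine Or.inr (PairAnd_ext (conj_comm_eval r l) ?_)
        exact ⟨(crossConj hro.conj_comm ha hb).1, (crossConj hro.conj_comm ha hb).2⟩
      · rcases factor_or_pairAnd hro.2.1 ha hb hab with ⟨F, h1, h2⟩ | hp
        · exact Or.inl ⟨F, List.mem_append.mpr (Or.inr h1), h2⟩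
        · refine Or.inr (PairAnd_ext (conj_comm_eval r l) ?_)
          exact liftConj_pairAnd hro.conj_comm ha hb hab hp

theorem factor_or_pairOr : ∀ {P : N}, P.RO → ∀ {a b}, a ∈ P.vars → b ∈ P.vars → a ≠ b →
    (∃ F ∈ orFactors P, a ∈ F.vars ∧ b ∈ F.vars) ∨ PairOr (fun w => P.evalL w) a b
  | lit n c, _, a, b, ha, hb, hab => Or.inl ⟨lit n c, by simp [orFactors], ha, hb⟩
  | conj l r, _, a, b, ha, hb, hab => Or.inl ⟨conj l r, by simp [orFactors], ha, hb⟩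
  | disj l r, hro, a, b, ha, hb, hab => by
      rcases Finset.mem_union.mp ha with ha | ha <;> rcases Finset.mem_union.mp hb with hb | hb
      · rcases factor_or_pairOr hro.1 ha hb hab with ⟨F, h1, h2⟩ | hp
        · exact Or.inl ⟨F, List.mem_append.mpr (Or.inl h1), h2⟩
        · exact Or.inr (liftDisj_pairOr hro ha hb hab hp)
      · exact Or.inr (crossDisj hro ha hb)
      · refine Or.inr (PairOr_ext (disj_comm_eval r l) ?_)
        exact ⟨(crossDisj hro.disj_comm ha hb).1, (crossDisj hro.disj_comm ha hb).2⟩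
      · rcases factor_or_pairOr hro.2.1 ha hb hab with ⟨F, h1, h2⟩ | hp
        · exact Or.inl ⟨F, List.mem_append.mpr (Or.inr h1), h2⟩
        · refine Or.inr (PairOr_ext (disj_comm_eval r l) ?_)
          exact liftDisj_pairOr hro.disj_comm ha hb hab hp

end N
namespace N

theorem upd2_comm {w : ℕ → Bool} {a x b y} (hab : a ≠ b) :
    upd2 w a x b y = upd2 w b y a x := by
  simp only [upd2]
  exact Function.update_comm hab x y w

theorem OrPair.swap {f : (ℕ → Bool) → Bool} {a b} (hab : a ≠ b) (h : OrPair f a b) :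
    OrPair f b a := by
  obtain ⟨w, hw⟩ := h
  refine ⟨w, fun x y => ?_⟩
  show f (upd2 w b x a y) = (x || y)
  rw [upd2_comm hab.symm]
  rw [show f (upd2 w a y b x) = (y || x) from hw y x, Bool.or_comm]

theorem AndPair.swap {f : (ℕ → Bool) → Bool} {a b} (hab : a ≠ b) (h : AndPair f a b) :
    AndPair f b a := by
  obtain ⟨w, hw⟩ := h
  refine ⟨w, fun x y => ?_⟩
  show f (upd2 w b x a y) = (x && y)
  rw [upd2_comm hab.symm]
  rw [show f (upd2 w a y b x) = (y && x) from hw y x, Bool.and_comm]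

theorem OrPair.mem_right {P : N} {a b} (h : OrPair (fun w => P.evalL w) a b) : b ∈ P.vars := by
  by_contra hb
  obtain ⟨w, hw⟩ := h
  have h1 : P.evalL (upd2 w a false b true) = (false || true) := hw false true
  have h2 : P.evalL (upd2 w a false b false) = (false || false) := hw false false
  have h3 := evalL_upd2_snd (w := w) (a := a) (x := false) (y := true) (y' := false) (P := P) hb
  rw [h1, h2] at h3
  simp at h3

theorem AndPair.mem_right {P : N} {a b} (h : AndPair (fun w => P.evalL w) a b) : b ∈ P.vars := by
  by_contra hb
  obtain ⟨w, hw⟩ := h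
  have h1 : P.evalL (upd2 w a true b true) = (true && true) := hw true true
  have h2 : P.evalL (upd2 w a true b false) = (true && false) := hw true false
  have h3 := evalL_upd2_snd (w := w) (a := a) (x := true) (y := true) (y' := false) (P := P) hb
  rw [h1, h2] at h3
  simp at h3

theorem vars_subset_of_eq {P Q : N} (hroP : P.RO) (heq : ∀ w, P.evalL w = Q.evalL w) :
    P.vars ⊆ Q.vars := by
  intro x hx
  by_contra hxQ
  obtain ⟨w, hw⟩ := exists_selector hroP hx
  have hQ : Q.evalL (Function.update w x true) = Q.evalL (Function.update w x false) := by
    apply evalL_congr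
    intro n hn
    have hnx : n ≠ x := fun h => hxQ (h ▸ hn)
    rw [Function.update_of_ne hnx, Function.update_of_ne hnx]
  rw [← heq, ← heq, hw true, hw false] at hQ
  simp at hQ

theorem mem_pairwise_unique {l : List N}
    (hp : l.Pairwise (fun F G => Disjoint F.vars G.vars)) {F G : N}
    (hF : F ∈ l) (hG : G ∈ l) {a : ℕ} (ha : a ∈ F.vars) (hb : a ∈ G.vars) : F = G := by
  induction l with
  | nil => cases hF
  | cons h t ih =>
      rcases List.mem_cons.mp hF with rfl | hF2 <;> rcases List.mem_cons.mp hG with rfl | hG2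
      · rfl
      · exact absurd hb (Finset.disjoint_left.mp ((List.pairwise_cons.mp hp).1 G hG2) ha)
      · exact absurd ha (Finset.disjoint_left.mp ((List.pairwise_cons.mp hp).1 F hF2) hb)
      · exact ih (List.pairwise_cons.mp hp).2 hF2 hG2

theorem pairwise_disjoint_middle {l1 l2 : List N} {G : N}
    (hp : (l1 ++ G :: l2).Pairwise (fun F G => Disjoint F.vars G.vars)) :
    ∀ G' ∈ l1 ++ l2, Disjoint G'.vars G.vars := by
  intro G' hG'
  rcases List.mem_append.mp hG' with h | h
  · exact (List.pairwise_append.mp hp).2.2 G' h G (by simp)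
  · have hp2 := (List.pairwise_append.mp hp).2.1
    exact ((List.pairwise_cons.mp hp2).1 G' h).symm

theorem matchAnd : ∀ (Fs Gs : List N), Fs ≠ [] → Gs ≠ [] →
    (∀ F ∈ Fs, ∃ G ∈ Gs, G.vars = F.vars) →
    (∀ G ∈ Gs, ∃ F ∈ Fs, F.vars = G.vars) →
    Fs.Pairwise (fun F G => Disjoint F.vars G.vars) →
    Gs.Pairwise (fun F G => Disjoint F.vars G.vars) →
    (∀ F ∈ Fs, ∀ G ∈ Gs, F.vars = G.vars → SN F G) →
    SN (listAnd Fs) (listAnd Gs)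
  | [], _, hFs, _, _, _, _, _, _ => absurd rfl hFs
  | F :: rest, Gs, _, hGs, h1, h2, hpF, hpG, h3 => by
      obtain ⟨G, hG, hGv⟩ := h1 F (by simp)
      obtain ⟨l1, l2, rfl⟩ := List.append_of_mem hG
      have hperm : (l1 ++ G :: l2).Perm (G :: (l1 ++ l2)) := List.perm_middle
      cases rest with
      | nil =>
          have hnil : l1 ++ l2 = [] := by
            by_contra hne
            obtain ⟨G', hG'⟩ := List.exists_mem_of_ne_nil _ hne
            obtain ⟨F', hF', hFv'⟩ := h2 G' (by
              rcases List.mem_append.mp hG' with h | h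
              · exact List.mem_append.mpr (Or.inl h)
              · exact List.mem_append.mpr (Or.inr (List.mem_cons.mpr (Or.inr h))))
            have hF'F : F' = F := by simpa using hF'
            subst hF'F
            have hdisj := pairwise_disjoint_middle hpG G' hG'
            obtain ⟨a, ha⟩ := vars_nonempty G'
            have hGG' : G'.vars = G.vars := by rw [hGv, ← hFv']
            exact Finset.disjoint_left.mp hdisj ha (hGG' ▸ ha)
          rcases List.append_eq_nil_iff.mp hnil with ⟨rfl, rfl⟩
          simpa [listAnd] using h3 F (by simp) G (by simp) hGv.symm
      | cons F2 rest' =>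
          have hl12 : l1 ++ l2 ≠ [] := by
            intro hnil
            rcases List.append_eq_nil_iff.mp hnil with ⟨rfl, rfl⟩
            obtain ⟨G2, hG2, hG2v⟩ := h1 F2 (by simp)
            have : G2 = G := by simpa using hG2
            subst this
            have hdisj := (List.pairwise_cons.mp hpF).1 F2 (by simp)
            obtain ⟨a, ha⟩ := vars_nonempty F
            have hFF2 : F.vars = F2.vars := by rw [← hGv, hG2v]
            exact Finset.disjoint_left.mp hdisj ha (hFF2 ▸ ha)
          have hrest : (F2 :: rest' : List N) ≠ [] := by simp
          have ihyp : SN (listAnd (F2 :: rest')) (listAnd (l1 ++ l2)) := by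
            apply matchAnd _ _ hrest hl12
            · intro F' hF'
              obtain ⟨G', hG', hGv'⟩ := h1 F' (List.mem_cons.mpr (Or.inr hF'))
              rcases List.mem_append.mp hG' with h | h
              · exact ⟨G', List.mem_append.mpr (Or.inl h), hGv'⟩
              · rcases List.mem_cons.mp h with rfl | h
                · exfalso
                  have hdisj := (List.pairwise_cons.mp hpF).1 F' hF'
                  obtain ⟨a, ha⟩ := vars_nonempty F
                  have hFF' : F.vars = F'.vars := by rw [← hGv, hGv']
                  exact Finset.disjoint_left.mp hdisj ha (hFF' ▸ ha)
                · exact ⟨G', List.mem_append.mpr (Or.inr h), hGv'⟩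
            · intro G' hG'
              have hG'mem : G' ∈ l1 ++ G :: l2 := by
                rcases List.mem_append.mp hG' with h | h
                · exact List.mem_append.mpr (Or.inl h)
                · exact List.mem_append.mpr (Or.inr (List.mem_cons.mpr (Or.inr h)))
              obtain ⟨F', hF', hFv'⟩ := h2 G' hG'mem
              rcases List.mem_cons.mp hF' with rfl | hF'
              · exfalso
                have hdisj := pairwise_disjoint_middle hpG G' hG'
                obtain ⟨a, ha⟩ := vars_nonempty G'
                have hGG' : G'.vars = G.vars := by rw [hGv, ← hFv']
                exact Finset.disjoint_left.mp hdisj ha (hGG' ▸ ha)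
              · exact ⟨F', hF', hFv'⟩
            · exact (List.pairwise_cons.mp hpF).2
            · exact hpG.sublist ((List.Sublist.refl l1).append (List.sublist_cons_self G l2))
            · intro F' hF' G' hG'
              exact h3 F' (List.mem_cons.mpr (Or.inr hF')) G' (by
                rcases List.mem_append.mp hG' with h | h
                · exact List.mem_append.mpr (Or.inl h)
                · exact List.mem_append.mpr (Or.inr (List.mem_cons.mpr (Or.inr h))))
          have step1 : SN (listAnd (F :: F2 :: rest')) (conj F (listAnd (F2 :: rest'))) := by
            rw [listAnd_cons F hrest]; exact SN.refl _
          have step2 : SN (conj F (listAnd (F2 :: rest')))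
              (conj G (listAnd (l1 ++ l2))) :=
            SN.congConj (h3 F (by simp) G hG hGv.symm) ihyp
          have step3 : SN (conj G (listAnd (l1 ++ l2))) (listAnd (l1 ++ G :: l2)) := by
            rw [← listAnd_cons G hl12]
            exact sn_listAnd_perm hperm.symm
          exact (step1.trans step2).trans step3

theorem matchOr : ∀ (Fs Gs : List N), Fs ≠ [] → Gs ≠ [] →
    (∀ F ∈ Fs, ∃ G ∈ Gs, G.vars = F.vars) →
    (∀ G ∈ Gs, ∃ F ∈ Fs, F.vars = G.vars) →
    Fs.Pairwise (fun F G => Disjoint F.vars G.vars) →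
    Gs.Pairwise (fun F G => Disjoint F.vars G.vars) →
    (∀ F ∈ Fs, ∀ G ∈ Gs, F.vars = G.vars → SN F G) →
    SN (listOr Fs) (listOr Gs)
  | [], _, hFs, _, _, _, _, _, _ => absurd rfl hFs
  | F :: rest, Gs, _, hGs, h1, h2, hpF, hpG, h3 => by
      obtain ⟨G, hG, hGv⟩ := h1 F (by simp)
      obtain ⟨l1, l2, rfl⟩ := List.append_of_mem hG
      have hperm : (l1 ++ G :: l2).Perm (G :: (l1 ++ l2)) := List.perm_middle
      cases rest with
      | nil =>
          have hnil : l1 ++ l2 = [] := by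
            by_contra hne
            obtain ⟨G', hG'⟩ := List.exists_mem_of_ne_nil _ hne
            obtain ⟨F', hF', hFv'⟩ := h2 G' (by
              rcases List.mem_append.mp hG' with h | h
              · exact List.mem_append.mpr (Or.inl h)
              · exact List.mem_append.mpr (Or.inr (List.mem_cons.mpr (Or.inr h))))
            have hF'F : F' = F := by simpa using hF'
            subst hF'F
            have hdisj := pairwise_disjoint_middle hpG G' hG'
            obtain ⟨a, ha⟩ := vars_nonempty G'
            have hGG' : G'.vars = G.vars := by rw [hGv, ← hFv']
            exact Finset.disjoint_left.mp hdisj ha (hGG' ▸ ha)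
          rcases List.append_eq_nil_iff.mp hnil with ⟨rfl, rfl⟩
          simpa [listOr] using h3 F (by simp) G (by simp) hGv.symm
      | cons F2 rest' =>
          have hl12 : l1 ++ l2 ≠ [] := by
            intro hnil
            rcases List.append_eq_nil_iff.mp hnil with ⟨rfl, rfl⟩
            obtain ⟨G2, hG2, hG2v⟩ := h1 F2 (by simp)
            have : G2 = G := by simpa using hG2
            subst this
            have hdisj := (List.pairwise_cons.mp hpF).1 F2 (by simp)
            obtain ⟨a, ha⟩ := vars_nonempty F
            have hFF2 : F.vars = F2.vars := by rw [← hGv, hG2v]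
            exact Finset.disjoint_left.mp hdisj ha (hFF2 ▸ ha)
          have hrest : (F2 :: rest' : List N) ≠ [] := by simp
          have ihyp : SN (listOr (F2 :: rest')) (listOr (l1 ++ l2)) := by
            apply matchOr _ _ hrest hl12
            · intro F' hF'
              obtain ⟨G', hG', hGv'⟩ := h1 F' (List.mem_cons.mpr (Or.inr hF'))
              rcases List.mem_append.mp hG' with h | h
              · exact ⟨G', List.mem_append.mpr (Or.inl h), hGv'⟩
              · rcases List.mem_cons.mp h with rfl | h
                · exfalso
                  have hdisj := (List.pairwise_cons.mp hpF).1 F' hF'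
                  obtain ⟨a, ha⟩ := vars_nonempty F
                  have hFF' : F.vars = F'.vars := by rw [← hGv, hGv']
                  exact Finset.disjoint_left.mp hdisj ha (hFF' ▸ ha)
                · exact ⟨G', List.mem_append.mpr (Or.inr h), hGv'⟩
            · intro G' hG'
              have hG'mem : G' ∈ l1 ++ G :: l2 := by
                rcases List.mem_append.mp hG' with h | h
                · exact List.mem_append.mpr (Or.inl h)
                · exact List.mem_append.mpr (Or.inr (List.mem_cons.mpr (Or.inr h)))
              obtain ⟨F', hF', hFv'⟩ := h2 G' hG'mem
              rcases List.mem_cons.mp hF' with rfl | hF'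
              · exfalso
                have hdisj := pairwise_disjoint_middle hpG G' hG'
                obtain ⟨a, ha⟩ := vars_nonempty G'
                have hGG' : G'.vars = G.vars := by rw [hGv, ← hFv']
                exact Finset.disjoint_left.mp hdisj ha (hGG' ▸ ha)
              · exact ⟨F', hF', hFv'⟩
            · exact (List.pairwise_cons.mp hpF).2
            · exact hpG.sublist ((List.Sublist.refl l1).append (List.sublist_cons_self G l2))
            · intro F' hF' G' hG'
              exact h3 F' (List.mem_cons.mpr (Or.inr hF')) G' (by
                rcases List.mem_append.mp hG' with h | h
                · exact List.mem_append.mpr (Or.inl h)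
                · exact List.mem_append.mpr (Or.inr (List.mem_cons.mpr (Or.inr h))))
          have step1 : SN (listOr (F :: F2 :: rest')) (disj F (listOr (F2 :: rest'))) := by
            rw [listOr_cons F hrest]; exact SN.refl _
          have step2 : SN (disj F (listOr (F2 :: rest')))
              (disj G (listOr (l1 ++ l2))) :=
            SN.congDisj (h3 F (by simp) G hG hGv.symm) ihyp
          have step3 : SN (disj G (listOr (l1 ++ l2))) (listOr (l1 ++ G :: l2)) := by
            rw [← listOr_cons G hl12]
            exact sn_listOr_perm hperm.symm
          exact (step1.trans step2).trans step3

end N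
namespace N

theorem andFactor_connected {P F : N} (hroP : P.RO) (hF : F ∈ andFactors P) {a b}
    (ha : a ∈ F.vars) (hb : b ∈ F.vars) (hab : a ≠ b) :
    OrPair (fun w => P.evalL w) a b ∨
      ∃ c ∈ F.vars, c ≠ a ∧ c ≠ b ∧
        OrPair (fun w => P.evalL w) a c ∧ OrPair (fun w => P.evalL w) c b := by
  have hroF : F.RO := (andFactors_props hF).1 hroP
  have hnc := (andFactors_props hF).2.2.2.2
  cases F with
  | lit n c0 =>
      exfalso
      apply hab
      have h1 : a = n := by simpa [vars] using ha
      have h2 : b = n := by simpa [vars] using hb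
      rw [h1, h2]
  | conj l r => exact absurd rfl (hnc l r)
  | disj Fl Fr =>
    have hlift : ∀ {x y}, x ∈ (disj Fl Fr).vars → y ∈ (disj Fl Fr).vars → x ≠ y →
        PairOr (fun w => (disj Fl Fr).evalL w) x y → OrPair (fun w => P.evalL w) x y :=
      fun hx hy hxy hp => (andFactor_pairOr hroP hF hx hy hxy hp).1
    rcases Finset.mem_union.mp ha with ha' | ha' <;> rcases Finset.mem_union.mp hb with hb' | hb'
    · obtain ⟨c, hc⟩ := vars_nonempty Fr
      have hca : c ≠ a := fun h => Finset.disjoint_left.mp hroF.2.2 ha' (h ▸ hc)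
      have hcb : c ≠ b := fun h => Finset.disjoint_left.mp hroF.2.2 hb' (h ▸ hc)
      refine Or.inr ⟨c, Finset.mem_union_right _ hc, hca, hcb, ?_, ?_⟩
      · exact hlift ha (Finset.mem_union_right _ hc) (fun h => hca h.symm)
          (crossDisj hroF ha' hc)
      · exact hlift (Finset.mem_union_right _ hc) hb hcb
          (PairOr_ext (disj_comm_eval Fr Fl) (crossDisj hroF.disj_comm hc hb'))
    · exact Or.inl (hlift ha hb hab (crossDisj hroF ha' hb'))
    · exact Or.inl (hlift ha hb hab
        (PairOr_ext (disj_comm_eval Fr Fl) (crossDisj hroF.disj_comm ha' hb')))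
    · obtain ⟨c, hc⟩ := vars_nonempty Fl
      have hca : c ≠ a := fun h => Finset.disjoint_left.mp hroF.2.2 (h ▸ hc) ha'
      have hcb : c ≠ b := fun h => Finset.disjoint_left.mp hroF.2.2 (h ▸ hc) hb'
      refine Or.inr ⟨c, Finset.mem_union_left _ hc, hca, hcb, ?_, ?_⟩
      · exact hlift ha (Finset.mem_union_left _ hc) (fun h => hca h.symm)
          (PairOr_ext (disj_comm_eval Fr Fl) (crossDisj hroF.disj_comm ha' hc))
      · exact hlift (Finset.mem_union_left _ hc) hb hcb (crossDisj hroF hc hb')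

theorem andBlock_absorb {Q G : N} (hroQ : Q.RO) (hG : G ∈ andFactors Q) {c d}
    (hc : c ∈ G.vars) (hcd : c ≠ d) (h : OrPair (fun w => Q.evalL w) c d) : d ∈ G.vars := by
  have hdQ : d ∈ Q.vars := h.mem_right
  have hcQ : c ∈ Q.vars := (andFactors_props hG).2.1 hc
  rcases factor_or_pairAnd hroQ hcQ hdQ hcd with ⟨G', hG', hcG', hdG'⟩ | hpa
  · exact (mem_pairwise_unique (andFactors_pairwise hroQ) hG' hG hcG' hc) ▸ hdG'
  · exact absurd hpa.2 (fun hs => h.not_shapeAnd hs)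

theorem andBlock_sub {P Q F G : N} (hroP : P.RO) (hroQ : Q.RO)
    (heq : ∀ w, P.evalL w = Q.evalL w)
    (hF : F ∈ andFactors P) (hG : G ∈ andFactors Q) {a}
    (haF : a ∈ F.vars) (haG : a ∈ G.vars) : F.vars ⊆ G.vars := by
  intro b hbF
  by_cases hab : a = b
  · exact hab ▸ haG
  rcases andFactor_connected hroP hF haF hbF hab with hor | ⟨c, hcF, hca, hcb, h1, h2⟩
  · exact andBlock_absorb hroQ hG haG hab (OrPair_ext heq hor)
  · have hcG : c ∈ G.vars :=
      andBlock_absorb hroQ hG haG (fun h => hca h.symm) (OrPair_ext heq h1)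
    exact andBlock_absorb hroQ hG hcG hcb (OrPair_ext heq h2)

theorem orFactor_connected {P F : N} (hroP : P.RO) (hF : F ∈ orFactors P) {a b}
    (ha : a ∈ F.vars) (hb : b ∈ F.vars) (hab : a ≠ b) :
    AndPair (fun w => P.evalL w) a b ∨
      ∃ c ∈ F.vars, c ≠ a ∧ c ≠ b ∧
        AndPair (fun w => P.evalL w) a c ∧ AndPair (fun w => P.evalL w) c b := by
  have hroF : F.RO := (orFactors_props hF).1 hroP
  have hnc := (orFactors_props hF).2.2.2.2
  cases F with
  | lit n c0 =>
      exfalso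
      apply hab
      have h1 : a = n := by simpa [vars] using ha
      have h2 : b = n := by simpa [vars] using hb
      rw [h1, h2]
  | disj l r => exact absurd rfl (hnc l r)
  | conj Fl Fr =>
    have hlift : ∀ {x y}, x ∈ (conj Fl Fr).vars → y ∈ (conj Fl Fr).vars → x ≠ y →
        PairAnd (fun w => (conj Fl Fr).evalL w) x y → AndPair (fun w => P.evalL w) x y :=
      fun hx hy hxy hp => (orFactor_pairAnd hroP hF hx hy hxy hp).1
    rcases Finset.mem_union.mp ha with ha' | ha' <;> rcases Finset.mem_union.mp hb with hb' | hb'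
    · obtain ⟨c, hc⟩ := vars_nonempty Fr
      have hca : c ≠ a := fun h => Finset.disjoint_left.mp hroF.2.2 ha' (h ▸ hc)
      have hcb : c ≠ b := fun h => Finset.disjoint_left.mp hroF.2.2 hb' (h ▸ hc)
      refine Or.inr ⟨c, Finset.mem_union_right _ hc, hca, hcb, ?_, ?_⟩
      · exact hlift ha (Finset.mem_union_right _ hc) (fun h => hca h.symm)
          (crossConj hroF ha' hc)
      · exact hlift (Finset.mem_union_right _ hc) hb hcb
          (PairAnd_ext (conj_comm_eval Fr Fl) (crossConj hroF.conj_comm hc hb'))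
    · exact Or.inl (hlift ha hb hab (crossConj hroF ha' hb'))
    · exact Or.inl (hlift ha hb hab
        (PairAnd_ext (conj_comm_eval Fr Fl) (crossConj hroF.conj_comm ha' hb')))
    · obtain ⟨c, hc⟩ := vars_nonempty Fl
      have hca : c ≠ a := fun h => Finset.disjoint_left.mp hroF.2.2 (h ▸ hc) ha'
      have hcb : c ≠ b := fun h => Finset.disjoint_left.mp hroF.2.2 (h ▸ hc) hb'
      refine Or.inr ⟨c, Finset.mem_union_left _ hc, hca, hcb, ?_, ?_⟩
      · exact hlift ha (Finset.mem_union_left _ hc) (fun h => hca h.symm)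
          (PairAnd_ext (conj_comm_eval Fr Fl) (crossConj hroF.conj_comm ha' hc))
      · exact hlift (Finset.mem_union_left _ hc) hb hcb (crossConj hroF hc hb')

theorem orBlock_absorb {Q G : N} (hroQ : Q.RO) (hG : G ∈ orFactors Q) {c d}
    (hc : c ∈ G.vars) (hcd : c ≠ d) (h : AndPair (fun w => Q.evalL w) c d) : d ∈ G.vars := by
  have hdQ : d ∈ Q.vars := h.mem_right
  have hcQ : c ∈ Q.vars := (orFactors_props hG).2.1 hc
  rcases factor_or_pairOr hroQ hcQ hdQ hcd with ⟨G', hG', hcG', hdG'⟩ | hpa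
  · exact (mem_pairwise_unique (orFactors_pairwise hroQ) hG' hG hcG' hc) ▸ hdG'
  · exact absurd hpa.2 (fun hs => h.not_shapeOr hs)

theorem orBlock_sub {P Q F G : N} (hroP : P.RO) (hroQ : Q.RO)
    (heq : ∀ w, P.evalL w = Q.evalL w)
    (hF : F ∈ orFactors P) (hG : G ∈ orFactors Q) {a}
    (haF : a ∈ F.vars) (haG : a ∈ G.vars) : F.vars ⊆ G.vars := by
  intro b hbF
  by_cases hab : a = b
  · exact hab ▸ haG
  rcases orFactor_connected hroP hF haF hbF hab with hor | ⟨c, hcF, hca, hcb, h1, h2⟩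
  · exact orBlock_absorb hroQ hG haG hab (AndPair_ext heq hor)
  · have hcG : c ∈ G.vars :=
      orBlock_absorb hroQ hG haG (fun h => hca h.symm) (AndPair_ext heq h1)
    exact orBlock_absorb hroQ hG hcG hcb (AndPair_ext heq h2)

theorem not_singleton_union {n : ℕ} {l r : N} (hd : Disjoint l.vars r.vars)
    (h : ({n} : Finset ℕ) = l.vars ∪ r.vars) : False := by
  obtain ⟨x, hx⟩ := vars_nonempty l
  obtain ⟨y, hy⟩ := vars_nonempty r
  have hxn : x = n := by
    have : x ∈ ({n} : Finset ℕ) := h ▸ Finset.mem_union_left _ hx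
    simpa using this
  have hyn : y = n := by
    have : y ∈ ({n} : Finset ℕ) := h ▸ Finset.mem_union_right _ hy
    simpa using this
  exact Finset.disjoint_left.mp hd hx (by rw [hxn, ← hyn]; exact hy)

theorem conj_disj_impossible {Pl Pr Ql Qr : N} (hroP : (conj Pl Pr).RO)
    (hroQ : (disj Ql Qr).RO)
    (heq : ∀ w, (conj Pl Pr).evalL w = (disj Ql Qr).evalL w) : False := by
  have hvars : (conj Pl Pr).vars = (disj Ql Qr).vars :=
    le_antisymm (vars_subset_of_eq hroP heq)
      (vars_subset_of_eq hroQ (fun w => (heq w).symm))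
  have memQ : ∀ x ∈ Pl.vars ∪ Pr.vars, x ∈ Ql.vars ∨ x ∈ Qr.vars := by
    intro x hx
    have : x ∈ (disj Ql Qr).vars := hvars ▸ hx
    exact Finset.mem_union.mp this
  have memP : ∀ x ∈ Ql.vars ∪ Qr.vars, x ∈ Pl.vars ∨ x ∈ Pr.vars := by
    intro x hx
    have : x ∈ (conj Pl Pr).vars := hvars.symm ▸ hx
    exact Finset.mem_union.mp this
  have excl1 : ∀ a b, a ∈ Pl.vars → b ∈ Pr.vars → a ∈ Ql.vars → b ∈ Qr.vars → False := by
    intro a b h1 h2 h3 h4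
    have pA := crossConj hroP h1 h2
    have pO := crossDisj hroQ h3 h4
    exact (AndPair_ext heq pA.1).not_shapeOr pO.2
  have excl2 : ∀ a b, a ∈ Pl.vars → b ∈ Pr.vars → a ∈ Qr.vars → b ∈ Ql.vars → False := by
    intro a b h1 h2 h3 h4
    have hab : a ≠ b := fun h => Finset.disjoint_left.mp hroP.2.2 h1 (h ▸ h2)
    have pA := crossConj hroP h1 h2
    have pO := crossDisj hroQ h4 h3
    exact ((AndPair_ext heq pA.1).swap hab).not_shapeOr pO.2
  obtain ⟨a0, ha0⟩ := vars_nonempty Pl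
  obtain ⟨b0, hb0⟩ := vars_nonempty Pr
  rcases memQ a0 (Finset.mem_union_left _ ha0) with haQ1 | haQ2
  · have hX2Y1 : ∀ b ∈ Pr.vars, b ∈ Ql.vars := fun b hb =>
      (memQ b (Finset.mem_union_right _ hb)).resolve_right
        (fun hbQ2 => excl1 a0 b ha0 hb haQ1 hbQ2)
    have hX1Y1 : ∀ a ∈ Pl.vars, a ∈ Ql.vars := fun a haX =>
      (memQ a (Finset.mem_union_left _ haX)).resolve_right
        (fun haQ2 => excl2 a b0 haX hb0 haQ2 (hX2Y1 b0 hb0))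
    obtain ⟨y, hy⟩ := vars_nonempty Qr
    have hyQl : y ∈ Ql.vars := by
      rcases memP y (Finset.mem_union_right _ hy) with h | h
      · exact hX1Y1 y h
      · exact hX2Y1 y h
    exact Finset.disjoint_left.mp hroQ.2.2 hyQl hy
  · have hX2Y2 : ∀ b ∈ Pr.vars, b ∈ Qr.vars := fun b hb =>
      (memQ b (Finset.mem_union_right _ hb)).resolve_left
        (fun hbQ1 => excl2 a0 b ha0 hb haQ2 hbQ1)
    have hX1Y2 : ∀ a ∈ Pl.vars, a ∈ Qr.vars := fun a haX =>
      (memQ a (Finset.mem_union_left _ haX)).resolve_left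
        (fun haQ1 => excl1 a b0 haX hb0 haQ1 (hX2Y2 b0 hb0))
    obtain ⟨y, hy⟩ := vars_nonempty Ql
    have hyQr : y ∈ Qr.vars := by
      rcases memP y (Finset.mem_union_left _ hy) with h | h
      · exact hX1Y2 y h
      · exact hX2Y2 y h
    exact Finset.disjoint_left.mp hroQ.2.2 hy hyQr

end N
namespace N

theorem core : ∀ (n : ℕ) (P Q : N), P.size + Q.size ≤ n → P.RO → Q.RO →
    (∀ w, P.evalL w = Q.evalL w) →
    (∀ m b c, P.HasLeaf m b → Q.HasLeaf m c → b = c) → SN P Q := by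
  intro n
  induction n using Nat.strong_induction_on with
  | _ n ih =>
  intro P Q hsz hroP hroQ heq hleaf
  have hvars : P.vars = Q.vars :=
    le_antisymm (vars_subset_of_eq hroP heq) (vars_subset_of_eq hroQ (fun w => (heq w).symm))
  cases P with
  | lit np bp =>
      cases Q with
      | lit nq bq =>
          have hnm : np = nq := by
            have := hvars
            simp only [vars] at this
            exact Finset.singleton_injective this
          subst hnm
          have hbc : bp = bq := hleaf np bp bq ⟨rfl, rfl⟩ ⟨rfl, rfl⟩
          subst hbc
          exact SN.refl _
      | conj Ql Qr => exact absurd hvars (fun h => not_singleton_union hroQ.2.2 h)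
      | disj Ql Qr => exact absurd hvars (fun h => not_singleton_union hroQ.2.2 h)
  | conj Pl Pr =>
      cases Q with
      | lit nq bq =>
          exact absurd hvars.symm (fun h => not_singleton_union hroP.2.2 h)
      | disj Ql Qr => exact absurd (conj_disj_impossible hroP hroQ heq) not_false
      | conj Ql Qr =>
          have hFG : ∀ F ∈ andFactors (conj Pl Pr), ∃ G ∈ andFactors (conj Ql Qr),
              G.vars = F.vars := by
            intro F hF
            obtain ⟨a, haF⟩ := vars_nonempty F
            have haP : a ∈ (conj Pl Pr).vars := (andFactors_props hF).2.1 haF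
            have haQ : a ∈ (conj Ql Qr).vars := hvars ▸ haP
            obtain ⟨G, hG, haG⟩ := exists_andFactor haQ
            exact ⟨G, hG, le_antisymm
              (andBlock_sub hroQ hroP (fun w => (heq w).symm) hG hF haG haF)
              (andBlock_sub hroP hroQ heq hF hG haF haG)⟩
          have hGF : ∀ G ∈ andFactors (conj Ql Qr), ∃ F ∈ andFactors (conj Pl Pr),
              F.vars = G.vars := by
            intro G hG
            obtain ⟨a, haG⟩ := vars_nonempty G
            have haQ : a ∈ (conj Ql Qr).vars := (andFactors_props hG).2.1 haG
            have haP : a ∈ (conj Pl Pr).vars := hvars.symm ▸ haQ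
            obtain ⟨F, hF, haF⟩ := exists_andFactor haP
            exact ⟨F, hF, le_antisymm
              (andBlock_sub hroP hroQ heq hF hG haF haG)
              (andBlock_sub hroQ hroP (fun w => (heq w).symm) hG hF haG haF)⟩
          have hSN : ∀ F ∈ andFactors (conj Pl Pr), ∀ G ∈ andFactors (conj Ql Qr),
              F.vars = G.vars → SN F G := by
            intro F hF G hG hvFG
            have hlt : F.size + G.size < n :=
              lt_of_lt_of_le (Nat.add_lt_add (andFactors_size_lt hF) (andFactors_size_lt hG)) hsz
            refine ih (F.size + G.size) hlt F G le_rfl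
              ((andFactors_props hF).1 hroP) ((andFactors_props hG).1 hroQ) (fun w => ?_)
              (fun m b c hb hc => hleaf m b c ((andFactors_props hF).2.2.2.1 m b hb)
                ((andFactors_props hG).2.2.2.1 m c hc))
            calc F.evalL w
                = (conj Pl Pr).evalL (fun k => if k ∈ F.vars then w k else true) :=
                  (andFactor_eval hroP hF w).symm
              _ = (conj Ql Qr).evalL (fun k => if k ∈ F.vars then w k else true) := heq _
              _ = (conj Ql Qr).evalL (fun k => if k ∈ G.vars then w k else true) := by
                  rw [hvFG]
              _ = G.evalL w := andFactor_eval hroQ hG w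
          refine (sn_flattenAnd _).trans (SN.trans ?_ (sn_flattenAnd _).symm)
          exact matchAnd _ _ (andFactors_ne_nil _) (andFactors_ne_nil _) hFG hGF
            (andFactors_pairwise hroP) (andFactors_pairwise hroQ) hSN
  | disj Pl Pr =>
      cases Q with
      | lit nq bq =>
          exact absurd hvars.symm (fun h => not_singleton_union hroP.2.2 h)
      | conj Ql Qr =>
          exact absurd (conj_disj_impossible hroQ hroP (fun w => (heq w).symm)) not_false
      | disj Ql Qr =>
          have hFG : ∀ F ∈ orFactors (disj Pl Pr), ∃ G ∈ orFactors (disj Ql Qr),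
              G.vars = F.vars := by
            intro F hF
            obtain ⟨a, haF⟩ := vars_nonempty F
            have haP : a ∈ (disj Pl Pr).vars := (orFactors_props hF).2.1 haF
            have haQ : a ∈ (disj Ql Qr).vars := hvars ▸ haP
            obtain ⟨G, hG, haG⟩ := exists_orFactor haQ
            exact ⟨G, hG, le_antisymm
              (orBlock_sub hroQ hroP (fun w => (heq w).symm) hG hF haG haF)
              (orBlock_sub hroP hroQ heq hF hG haF haG)⟩
          have hGF : ∀ G ∈ orFactors (disj Ql Qr), ∃ F ∈ orFactors (disj Pl Pr),
              F.vars = G.vars := by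
            intro G hG
            obtain ⟨a, haG⟩ := vars_nonempty G
            have haQ : a ∈ (disj Ql Qr).vars := (orFactors_props hG).2.1 haG
            have haP : a ∈ (disj Pl Pr).vars := hvars.symm ▸ haQ
            obtain ⟨F, hF, haF⟩ := exists_orFactor haP
            exact ⟨F, hF, le_antisymm
              (orBlock_sub hroP hroQ heq hF hG haF haG)
              (orBlock_sub hroQ hroP (fun w => (heq w).symm) hG hF haG haF)⟩
          have hSN : ∀ F ∈ orFactors (disj Pl Pr), ∀ G ∈ orFactors (disj Ql Qr),
              F.vars = G.vars → SN F G := by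
            intro F hF G hG hvFG
            have hlt : F.size + G.size < n :=
              lt_of_lt_of_le (Nat.add_lt_add (orFactors_size_lt hF) (orFactors_size_lt hG)) hsz
            refine ih (F.size + G.size) hlt F G le_rfl
              ((orFactors_props hF).1 hroP) ((orFactors_props hG).1 hroQ) (fun w => ?_)
              (fun m b c hb hc => hleaf m b c ((orFactors_props hF).2.2.2.1 m b hb)
                ((orFactors_props hG).2.2.2.1 m c hc))
            calc F.evalL w
                = (disj Pl Pr).evalL (fun k => if k ∈ F.vars then w k else false) :=
                  (orFactor_eval hroP hF w).symm
              _ = (disj Ql Qr).evalL (fun k => if k ∈ F.vars then w k else false) := heq _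
              _ = (disj Ql Qr).evalL (fun k => if k ∈ G.vars then w k else false) := by
                  rw [hvFG]
              _ = G.evalL w := orFactor_eval hroQ hG w
          refine (sn_flattenOr _).trans (SN.trans ?_ (sn_flattenOr _).symm)
          exact matchOr _ _ (orFactors_ne_nil _) (orFactors_ne_nil _) hFG hGF
            (orFactors_pairwise hroP) (orFactors_pairwise hroQ) hSN

end N
theorem sderN_sound {A B : Form} (h : SderN A B) : TautEquiv A B := by
  induction h with
  | refl => intro v; rfl
  | assocAnd A B C => intro v; simp [Form.eval, Bool.and_assoc]
  | assocOr A B C => intro v; simp [Form.eval, Bool.or_assoc]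
  | commAnd A B => intro v; simp [Form.eval, Bool.and_comm]
  | commOr A B => intro v; simp [Form.eval, Bool.or_comm]
  | negneg A => intro v; simp [Form.eval]
  | deMorganAnd A B => intro v; simp [Form.eval]
  | deMorganOr A B => intro v; simp [Form.eval]
  | symm _ ih => intro v; exact (ih v).symm
  | trans _ _ ih1 ih2 => intro v; exact (ih1 v).trans (ih2 v)
  | congAnd _ _ ih1 ih2 => intro v; simp [Form.eval, ih1 v, ih2 v]
  | congOr _ _ ih1 ih2 => intro v; simp [Form.eval, ih1 v, ih2 v]
  | congNeg _ ih => intro v; simp [Form.eval, ih v]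

namespace N

def toN : Form → Bool → N
  | .var n, s => .lit n s
  | .neg A, s => toN A (!s)
  | .and A B, s => if s then .conj (toN A s) (toN B s) else .disj (toN A s) (toN B s)
  | .or A B, s => if s then .disj (toN A s) (toN B s) else .conj (toN A s) (toN B s)
  | _, _ => .lit 0 true

theorem toN_sder : ∀ A : Form, IsNAO A →
    SderN A (toN A true).toForm ∧ SderN (Form.neg A) (toN A false).toForm
  | .var n, _ => ⟨SderN.refl _, SderN.refl _⟩
  | .neg A, h => by
      have ih := toN_sder A h
      constructor
      · show SderN (Form.neg A) (toN A false).toForm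
        exact ih.2
      · show SderN (Form.neg (Form.neg A)) (toN A true).toForm
        exact (SderN.negneg A).trans ih.1
  | .and A B, h => by
      have ih1 := toN_sder A h.1
      have ih2 := toN_sder B h.2
      constructor
      · show SderN (A.and B) (Form.and (toN A true).toForm (toN B true).toForm)
        exact SderN.congAnd ih1.1 ih2.1
      · show SderN (Form.neg (A.and B)) (Form.or (toN A false).toForm (toN B false).toForm)
        exact (SderN.deMorganAnd A B).trans (SderN.congOr ih1.2 ih2.2)
  | .or A B, h => by
      have ih1 := toN_sder A h.1
      have ih2 := toN_sder B h.2
      constructor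
      · show SderN (A.or B) (Form.or (toN A true).toForm (toN B true).toForm)
        exact SderN.congOr ih1.1 ih2.1
      · show SderN (Form.neg (A.or B)) (Form.and (toN A false).toForm (toN B false).toForm)
        exact (SderN.deMorganOr A B).trans (SderN.congAnd ih1.2 ih2.2)
  | .top, h => absurd h (by simp [IsNAO])
  | .bot, h => absurd h (by simp [IsNAO])

theorem toN_letters : ∀ A : Form, IsNAO A → ∀ s, ((toN A s).toForm).letters = A.letters
  | .var n, _, s => by cases s <;> simp [toN, toForm, Form.letters]
  | .neg A, h, s => by
      show ((toN A (!s)).toForm).letters = A.letters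
      exact toN_letters A h (!s)
  | .and A B, h, s => by
      cases s
      · show ((disj (toN A false) (toN B false)).toForm).letters = _
        simp [toForm, Form.letters, toN_letters A h.1, toN_letters B h.2]
      · show ((conj (toN A true) (toN B true)).toForm).letters = _
        simp [toForm, Form.letters, toN_letters A h.1, toN_letters B h.2]
  | .or A B, h, s => by
      cases s
      · show ((conj (toN A false) (toN B false)).toForm).letters = _
        simp [toForm, Form.letters, toN_letters A h.1, toN_letters B h.2]
      · show ((disj (toN A true) (toN B true)).toForm).letters = _
        simp [toForm, Form.letters, toN_letters A h.1, toN_letters B h.2]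
  | .top, h, _ => absurd h (by simp [IsNAO])
  | .bot, h, _ => absurd h (by simp [IsNAO])

theorem mem_letters_toForm : ∀ (P : N) (x : ℕ), x ∈ (P.toForm).letters ↔ x ∈ P.vars
  | lit n b, x => by cases b <;> simp [toForm, Form.letters, vars]
  | conj l r, x => by
      simp [toForm, Form.letters, vars, mem_letters_toForm l x, mem_letters_toForm r x]
  | disj l r, x => by
      simp [toForm, Form.letters, vars, mem_letters_toForm l x, mem_letters_toForm r x]

theorem ro_of_nodup : ∀ P : N, (P.toForm).letters.Nodup → P.RO
  | lit n b, _ => trivial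
  | conj l r, h => by
      have h' : (l.toForm.letters + r.toForm.letters).Nodup := by
        simpa [toForm, Form.letters] using h
      rcases Multiset.nodup_add.mp h' with ⟨h1, h2, h3⟩
      refine ⟨ro_of_nodup l h1, ro_of_nodup r h2, Finset.disjoint_left.mpr ?_⟩
      intro x hx hxr
      exact Multiset.disjoint_left.mp h3 ((mem_letters_toForm l x).mpr hx) ((mem_letters_toForm r x).mpr hxr)
  | disj l r, h => by
      have h' : (l.toForm.letters + r.toForm.letters).Nodup := by
        simpa [toForm, Form.letters] using h
      rcases Multiset.nodup_add.mp h' with ⟨h1, h2, h3⟩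
      refine ⟨ro_of_nodup l h1, ro_of_nodup r h2, Finset.disjoint_left.mpr ?_⟩
      intro x hx hxr
      exact Multiset.disjoint_left.mp h3 ((mem_letters_toForm l x).mpr hx) ((mem_letters_toForm r x).mpr hxr)

theorem eval_toForm : ∀ (P : N), P.RO → ∀ (v : ℕ → Bool),
    (P.toForm).eval v = P.evalL (fun k => v k == P.pol k)
  | lit n b, _, v => by cases b <;> cases h : v n <;> simp [toForm, Form.eval, evalL, pol, h]
  | conj l r, hro, v => by
      have h1 : l.evalL (fun k => v k == (conj l r).pol k)
          = l.evalL (fun k => v k == l.pol k) := by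
        apply evalL_congr
        intro k hk
        simp [pol, hk]
      have h2 : r.evalL (fun k => v k == (conj l r).pol k)
          = r.evalL (fun k => v k == r.pol k) := by
        apply evalL_congr
        intro k hk
        have : k ∉ l.vars := fun hc => Finset.disjoint_left.mp hro.2.2 hc hk
        simp [pol, this]
      show (l.toForm.eval v && r.toForm.eval v) = _
      rw [eval_toForm l hro.1 v, eval_toForm r hro.2.1 v]
      show _ = (l.evalL _ && r.evalL _)
      rw [h1, h2]
  | disj l r, hro, v => by
      have h1 : l.evalL (fun k => v k == (disj l r).pol k)
          = l.evalL (fun k => v k == l.pol k) := by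
        apply evalL_congr
        intro k hk
        simp [pol, hk]
      have h2 : r.evalL (fun k => v k == (disj l r).pol k)
          = r.evalL (fun k => v k == r.pol k) := by
        apply evalL_congr
        intro k hk
        have : k ∉ l.vars := fun hc => Finset.disjoint_left.mp hro.2.2 hc hk
        simp [pol, this]
      show (l.toForm.eval v || r.toForm.eval v) = _
      rw [eval_toForm l hro.1 v, eval_toForm r hro.2.1 v]
      show _ = (l.evalL _ || r.evalL _)
      rw [h1, h2]

end N
namespace N

theorem beq_beq (a b : Bool) : ((a == b) == b) = a := by cases a <;> cases b <;> rfl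

theorem key_selector {P : N} (hroP : P.RO) {x : ℕ} {w : ℕ → Bool}
    (hw : ∀ c, P.evalL (Function.update w x c) = c) :
    ∀ c, P.toForm.eval (fun k => (Function.update w x c k) == P.pol k) = c := by
  intro c
  rw [eval_toForm P hroP]
  have hcg : P.evalL (fun k => ((Function.update w x c k == P.pol k) == P.pol k))
      = P.evalL (Function.update w x c) :=
    evalL_congr (fun k _ => beq_beq _ _)
  rw [hcg]
  exact hw c

theorem vars_subset_of_evalForm {P Q : N} (hroP : P.RO) (hroQ : Q.RO)
    (h : ∀ v, P.toForm.eval v = Q.toForm.eval v) : P.vars ⊆ Q.vars := by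
  intro x hx
  by_contra hxQ
  obtain ⟨w, hw⟩ := exists_selector hroP hx
  have key := key_selector hroP hw
  have hQc : ∀ c, Q.toForm.eval (fun k => (Function.update w x c k) == P.pol k)
      = Q.evalL (fun k => (w k == P.pol k) == Q.pol k) := by
    intro c
    rw [eval_toForm Q hroQ]
    apply evalL_congr
    intro k hk
    have hkx : k ≠ x := fun hh => hxQ (hh ▸ hk)
    rw [Function.update_of_ne hkx]
  have e1 : Q.toForm.eval (fun k => (Function.update w x true k) == P.pol k) = true := by
    rw [← h]; exact key true
  have e2 : Q.toForm.eval (fun k => (Function.update w x false k) == P.pol k) = false := by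
    rw [← h]; exact key false
  rw [hQc true] at e1
  rw [hQc false] at e2
  rw [e1] at e2
  exact absurd e2 (by simp)

theorem pol_eq_of_evalForm {P Q : N} (hroP : P.RO) (hroQ : Q.RO)
    (h : ∀ v, P.toForm.eval v = Q.toForm.eval v) {x : ℕ}
    (hxP : x ∈ P.vars) (hxQ : x ∈ Q.vars) : P.pol x = Q.pol x := by
  by_contra hne
  obtain ⟨w, hw⟩ := exists_selector hroP hxP
  have key := key_selector hroP hw
  have hQc : ∀ c, Q.toForm.eval (fun k => (Function.update w x c k) == P.pol k)
      = Q.evalL (Function.update (fun k => (w k == P.pol k) == Q.pol k) x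
          ((c == P.pol x) == Q.pol x)) := by
    intro c
    rw [eval_toForm Q hroQ]
    apply evalL_congr
    intro k hk
    by_cases hkx : k = x
    · subst hkx
      rw [Function.update_self, Function.update_self]
    · rw [Function.update_of_ne hkx, Function.update_of_ne hkx]
  have e : ∀ c, Q.evalL (Function.update (fun k => (w k == P.pol k) == Q.pol k) x
      ((c == P.pol x) == Q.pol x)) = c := by
    intro c
    rw [← hQc c, ← h]
    exact key c
  have mono : Q.evalL (Function.update (fun k => (w k == P.pol k) == Q.pol k) x false) = true →
      Q.evalL (Function.update (fun k => (w k == P.pol k) == Q.pol k) x true) = true := by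
    intro het
    refine evalL_mono (fun k hk => ?_) het
    by_cases hkx : k = x
    · subst hkx
      rw [Function.update_self] at hk
      exact absurd hk (by simp)
    · rw [Function.update_of_ne hkx] at hk ⊢
      exact hk
  cases hP2 : P.pol x <;> cases hQ2 : Q.pol x
  · exact hne (by rw [hP2, hQ2])
  · have et := e true
    have ef := e false
    rw [hP2, hQ2] at et ef
    have et' : Q.evalL (Function.update (fun k => (w k == P.pol k) == Q.pol k) x false)
        = true := et
    have ef' : Q.evalL (Function.update (fun k => (w k == P.pol k) == Q.pol k) x true)
        = false := ef
    have := mono et'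
    rw [ef'] at this
    exact absurd this (by simp)
  · have et := e true
    have ef := e false
    rw [hP2, hQ2] at et ef
    have et' : Q.evalL (Function.update (fun k => (w k == P.pol k) == Q.pol k) x false)
        = true := et
    have ef' : Q.evalL (Function.update (fun k => (w k == P.pol k) == Q.pol k) x true)
        = false := ef
    have := mono et'
    rw [ef'] at this
    exact absurd this (by simp)
  · exact hne (by rw [hP2, hQ2])

theorem evalL_eq_of_evalForm {P Q : N} (hroP : P.RO) (hroQ : Q.RO)
    (h : ∀ v, P.toForm.eval v = Q.toForm.eval v)
    (hpol : ∀ x ∈ Q.vars, P.pol x = Q.pol x) : ∀ w, P.evalL w = Q.evalL w := by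
  intro w
  have h1 : P.toForm.eval (fun k => w k == P.pol k) = P.evalL w := by
    rw [eval_toForm P hroP]
    exact evalL_congr (fun k _ => beq_beq _ _)
  have h2 : Q.toForm.eval (fun k => w k == P.pol k) = Q.evalL w := by
    rw [eval_toForm Q hroQ]
    apply evalL_congr
    intro k hk
    rw [← hpol k hk]
    exact beq_beq _ _
  rw [← h1, ← h2, h]

end N
theorem stmt8 (A B : Form) (hA : IsNAO A) (hB : IsNAO B)
    (hdA : Diversified A) (hdB : Diversified B) :
    TautEquiv A B ↔ SderN A B := by
  constructor
  · intro hTE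
    have hroP : (N.toN A true).RO := N.ro_of_nodup _ (by
      show ((N.toN A true).toForm).letters.Nodup
      rw [N.toN_letters A hA true]; exact hdA)
    have hroQ : (N.toN B true).RO := N.ro_of_nodup _ (by
      show ((N.toN B true).toForm).letters.Nodup
      rw [N.toN_letters B hB true]; exact hdB)
    have dA := (N.toN_sder A hA).1
    have dB := (N.toN_sder B hB).1
    have heqF : ∀ v, (N.toN A true).toForm.eval v = (N.toN B true).toForm.eval v := fun v =>
      (sderN_sound dA v).symm.trans ((hTE v).trans (sderN_sound dB v))
    have hsub2 := N.vars_subset_of_evalForm hroQ hroP (fun v => (heqF v).symm)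
    have hpol : ∀ x ∈ (N.toN B true).vars, (N.toN A true).pol x = (N.toN B true).pol x :=
      fun x hx => N.pol_eq_of_evalForm hroP hroQ heqF (hsub2 hx) hx
    have heqL := N.evalL_eq_of_evalForm hroP hroQ heqF hpol
    have hleaf : ∀ m b c, (N.toN A true).HasLeaf m b → (N.toN B true).HasLeaf m c → b = c := by
      intro m b c hb hc
      rw [← N.pol_of_hasLeaf hroP hb, ← N.pol_of_hasLeaf hroQ hc]
      exact hpol m (N.hasLeaf_mem_vars hc)
    have hSN := N.core ((N.toN A true).size + (N.toN B true).size) _ _ le_rfl hroP hroQ heqL hleaf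
    exact (dA.trans hSN).trans dB.symm
  · exact sderN_sound
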